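/- arXiv:math/0402151 — 13 statements merged into one kernel-verified Lean document; each statement's English description precedes it below -/
import Mathlib

section
/- In any double algebra $A$, the image $L := \Phi_L(A)$ of the map $\Phi_L(a) = a \star e$ is a left ideal of the horizontal algebra $H = (A, \star, i)$ and a unital subalgebra of the vertical algebra $V = (A, \circ, e)$. -/
/-- A double algebra over a commutative ring `k`: a `k`-module `A` with two
associative unital bilinear multiplications, the vertical `vmul` (written `∘` in the
paper, unit `e`) and the horizontal `hmul` (written `⋆`, unit `i`), satisfying
axioms A1–A8 of Szlachányi's Definition 1.1. -/
structure DoubleAlgebra (k : Type*) (A : Type*) [CommRing k] [AddCommGroup A]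
    [Module k A] where
  vmul : A →ₗ[k] A →ₗ[k] A
  hmul : A →ₗ[k] A →ₗ[k] A
  e : A
  i : A
  vmul_assoc : ∀ a b c, vmul (vmul a b) c = vmul a (vmul b c)
  hmul_assoc : ∀ a b c, hmul (hmul a b) c = hmul a (hmul b c)
  vmul_e : ∀ a, vmul a e = a
  e_vmul : ∀ a, vmul e a = a
  hmul_i : ∀ a, hmul a i = a
  i_hmul : ∀ a, hmul i a = a
  A1 : ∀ a b, vmul (hmul a e) b = hmul (vmul (hmul a e) i) b
  A2 : ∀ a b, vmul a (hmul b e) = hmul (vmul i (hmul b e)) a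
  A3 : ∀ a b, hmul (vmul a i) b = vmul (hmul (vmul a i) e) b
  A4 : ∀ a b, hmul a (vmul b i) = vmul (hmul e (vmul b i)) a
  A5 : ∀ a b, vmul a (hmul e b) = hmul a (vmul i (hmul e b))
  A6 : ∀ a b, vmul (hmul e a) b = hmul b (vmul (hmul e a) i)
  A7 : ∀ a b, hmul a (vmul i b) = vmul a (hmul e (vmul i b))
  A8 : ∀ a b, hmul (vmul i a) b = vmul b (hmul (vmul i a) e)

variable {k A : Type*} [CommRing k] [AddCommGroup A] [Module k A]

/-- `Φ_L(a) = a ⋆ e`. -/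
def DoubleAlgebra.PhiL (D : DoubleAlgebra k A) (a : A) : A := D.hmul a D.e
/-- `Φ_R(a) = e ⋆ a`. -/
def DoubleAlgebra.PhiR (D : DoubleAlgebra k A) (a : A) : A := D.hmul D.e a
/-- `Φ_B(a) = a ∘ i`. -/
def DoubleAlgebra.PhiB (D : DoubleAlgebra k A) (a : A) : A := D.vmul a D.i
/-- `Φ_T(a) = i ∘ a`. -/
def DoubleAlgebra.PhiT (D : DoubleAlgebra k A) (a : A) : A := D.vmul D.i a

/-! Left multiplication by `h` in `H` commutes with `Φ_L` by associativity of `⋆`, and axiom A1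
says that vertical multiplication by an element of `L` is horizontal left multiplication by
another element, so closure of `L` under `∘` reduces to `L` being a left ideal of `H`. -/

namespace DoubleAlgebra

variable (D : DoubleAlgebra k A)

theorem hmul_phiL (h a : A) : D.hmul h (D.PhiL a) = D.PhiL (D.hmul h a) :=
  (D.hmul_assoc h a D.e).symm

theorem phiL_i : D.PhiL D.i = D.e :=
  D.i_hmul D.e

theorem vmul_phiL (a b : A) : D.vmul (D.PhiL a) b = D.hmul (D.PhiB (D.PhiL a)) b :=
  D.A1 a b

theorem hmul_mem_range_phiL (h x : A) (hx : x ∈ Set.range D.PhiL) :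
    D.hmul h x ∈ Set.range D.PhiL := by
  obtain ⟨a, rfl⟩ := hx
  exact ⟨D.hmul h a, (D.hmul_phiL h a).symm⟩

theorem vmul_mem_range_phiL {x y : A} (hx : x ∈ Set.range D.PhiL)
    (hy : y ∈ Set.range D.PhiL) : D.vmul x y ∈ Set.range D.PhiL := by
  obtain ⟨a, rfl⟩ := hx
  rw [vmul_phiL]
  exact D.hmul_mem_range_phiL _ y hy

end DoubleAlgebra

/-- `L = Φ_L(A)` is a left ideal of the horizontal algebra `H` and a
unital subalgebra of the vertical algebra `V`. -/
theorem stmt0 (D : DoubleAlgebra k A) :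
    (∀ h x, x ∈ Set.range D.PhiL → D.hmul h x ∈ Set.range D.PhiL) ∧
    D.e ∈ Set.range D.PhiL ∧
    (∀ x y, x ∈ Set.range D.PhiL → y ∈ Set.range D.PhiL →
      D.vmul x y ∈ Set.range D.PhiL) :=
  ⟨D.hmul_mem_range_phiL, ⟨D.i, D.phiL_i⟩, fun _ _ => D.vmul_mem_range_phiL⟩
end

section
/- In any double algebra $A$, the map $\Phi_L$ restricted to $V$ is an $L$-$L$-bimodule map onto $L$, i.e., $\Phi_L(\Phi_L(a)\circ b) = \Phi_L(a)\circ\Phi_L(b)$ and $\Phi_L(a\circ\Phi_L(b)) = \Phi_L(a)\circ\Phi_L(b)$ for all $a, b \in A$. -/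
variable {k A : Type*} [CommRing k] [AddCommGroup A] [Module k A]

/-!
Axioms A1 and A2 say that `∘`-multiplying by an element `x ⋆ e` of `L`, on either side,
is the same as `⋆`-multiplying on the left by a suitable element. A left `⋆`-multiplication
commutes with `Φ_L = (-) ⋆ e` by `⋆`-associativity, and reading A1 (resp. A2) backwards
turns it into `∘`-multiplication again.
-/

namespace DoubleAlgebra

variable (D : DoubleAlgebra k A)

theorem PhiL_PhiL_vmul (a b : A) :
    D.PhiL (D.vmul (D.PhiL a) b) = D.vmul (D.PhiL a) (D.PhiL b) := by
  unfold PhiL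
  rw [D.A1, D.hmul_assoc, ← D.A1]

theorem PhiL_vmul_PhiL (a b : A) :
    D.PhiL (D.vmul a (D.PhiL b)) = D.vmul (D.PhiL a) (D.PhiL b) := by
  unfold PhiL
  rw [D.A2, D.hmul_assoc, ← D.A2]

end DoubleAlgebra

/-- `Φ_L` is an `L`-`L`-bimodule map onto `L`:
`Φ_L(Φ_L(a)∘b) = Φ_L(a)∘Φ_L(b)` and `Φ_L(a∘Φ_L(b)) = Φ_L(a)∘Φ_L(b)`. -/
theorem stmt1 (D : DoubleAlgebra k A) (a b : A) :
    D.PhiL (D.vmul (D.PhiL a) b) = D.vmul (D.PhiL a) (D.PhiL b) ∧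
    D.PhiL (D.vmul a (D.PhiL b)) = D.vmul (D.PhiL a) (D.PhiL b) :=
  ⟨D.PhiL_PhiL_vmul a b, D.PhiL_vmul_PhiL a b⟩
end

section
/- In any double algebra, the elements of $L$ and $R$ commute in the vertical algebra: for all $a, b \in A$, $\Phi_L(a)\circ\Phi_R(b) = \Phi_R(b)\circ\Phi_L(a)$, and both sides equal $a\star e\star b$. -/
variable {k A : Type*} [CommRing k] [AddCommGroup A] [Module k A]

/-! Axioms A1 and A6 with second argument `e` say that `Φ_L ∘ Φ_B` fixes `L` and `Φ_R ∘ Φ_B`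
fixes `R`. Fed back into A1 and A6, this turns both vertical products `(a ⋆ e) ∘ (e ⋆ b)` and
`(e ⋆ b) ∘ (a ⋆ e)` into the horizontal product `a ⋆ e ⋆ b`. -/

namespace DoubleAlgebra

variable (D : DoubleAlgebra k A)

theorem phiL_phiB_phiL (a : A) : D.PhiL (D.PhiB (D.PhiL a)) = D.PhiL a := by
  simpa only [PhiL, PhiB, D.vmul_e] using (D.A1 a D.e).symm

theorem phiR_phiB_phiR (b : A) : D.PhiR (D.PhiB (D.PhiR b)) = D.PhiR b := by
  simpa only [PhiR, PhiB, D.vmul_e] using (D.A6 b D.e).symm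

theorem vmul_phiL_phiR (a b : A) :
    D.vmul (D.PhiL a) (D.PhiR b) = D.hmul (D.PhiL a) b := by
  rw [PhiL, PhiR, D.A1, ← D.hmul_assoc]
  exact congrArg (D.hmul · b) (D.phiL_phiB_phiL a)

theorem vmul_phiR_phiL (a b : A) :
    D.vmul (D.PhiR b) (D.PhiL a) = D.hmul (D.PhiL a) b := by
  rw [PhiR, D.A6, PhiL, D.hmul_assoc, D.hmul_assoc]
  exact congrArg (D.hmul a) (D.phiR_phiB_phiR b)

end DoubleAlgebra

/-- elements of `L` and `R` commute vertically, and
`Φ_L(a)∘Φ_R(b) = a ⋆ e ⋆ b`. -/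
theorem stmt5 (D : DoubleAlgebra k A) (a b : A) :
    D.vmul (D.PhiL a) (D.PhiR b) = D.vmul (D.PhiR b) (D.PhiL a) ∧
    D.vmul (D.PhiL a) (D.PhiR b) = D.hmul (D.hmul a D.e) b :=
  ⟨(D.vmul_phiL_phiR a b).trans (D.vmul_phiR_phiL a b).symm, D.vmul_phiL_phiR a b⟩
end

section
/- In any double algebra, the elements of $B$ and $T$ commute in the horizontal algebra: for all $a, b \in A$, $\Phi_B(a)\star\Phi_T(b) = \Phi_T(b)\star\Phi_B(a)$. -/
variable {k A : Type*} [CommRing k] [AddCommGroup A] [Module k A]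

namespace DoubleAlgebra

variable (D : DoubleAlgebra k A) (a b : A)

theorem PhiB_PhiL_PhiB : D.PhiB (D.PhiL (D.PhiB a)) = D.PhiB a :=
  (D.A3 a D.i).symm.trans (D.hmul_i _)

theorem PhiB_PhiR_PhiB : D.PhiB (D.PhiR (D.PhiB a)) = D.PhiB a :=
  (D.A4 D.i a).symm.trans (D.i_hmul _)

theorem PhiB_hmul_PhiT : D.hmul (D.PhiB a) (D.PhiT b) = D.vmul (D.PhiB a) b :=
  calc D.hmul (D.PhiB a) (D.PhiT b) = D.vmul (D.PhiL (D.PhiB a)) (D.vmul D.i b) := D.A3 a _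
    _ = D.vmul (D.PhiB (D.PhiL (D.PhiB a))) b := (D.vmul_assoc _ _ _).symm
    _ = D.vmul (D.PhiB a) b := by rw [PhiB_PhiL_PhiB]

theorem PhiT_hmul_PhiB : D.hmul (D.PhiT b) (D.PhiB a) = D.vmul (D.PhiB a) b :=
  calc D.hmul (D.PhiT b) (D.PhiB a) = D.vmul (D.PhiR (D.PhiB a)) (D.vmul D.i b) := D.A4 _ a
    _ = D.vmul (D.PhiB (D.PhiR (D.PhiB a))) b := (D.vmul_assoc _ _ _).symm
    _ = D.vmul (D.PhiB a) b := by rw [PhiB_PhiR_PhiB]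

end DoubleAlgebra

/-- elements of `B` and `T` commute in the horizontal algebra. -/
theorem stmt6 (D : DoubleAlgebra k A) (a b : A) :
    D.hmul (D.PhiB a) (D.PhiT b) = D.hmul (D.PhiT b) (D.PhiB a) := by
  rw [D.PhiB_hmul_PhiT, D.PhiT_hmul_PhiB]
end

section
/- In any double algebra, every element $l \in L$ lies in the set $\mathcal{I}_R := \{x \in A \mid x\star a = x\star\Phi_B\Phi_R(a) \text{ for all } a\}$, and every element of $\mathcal{I}_R$ commutes vertically with every element of $R$: $l'\circ\Phi_R(a) = \Phi_R(a)\circ l'$ for all $l' \in \mathcal{I}_R$ and $a \in A$. -/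
variable {k A : Type*} [CommRing k] [AddCommGroup A] [Module k A]

/-! Axioms A5 and A6 with one argument equal to `e` give `Φ_R Φ_B Φ_R = Φ_R` and
`Φ_R Φ_T Φ_R = Φ_R`. Using these, A4 and A5 turn both `Φ_R(a) ∘ x` and `x ∘ Φ_R(a)` into `x ⋆ a` for every
`x ∈ 𝓘_R`, and `L ⊆ 𝓘_R` follows from associativity of `⋆`. -/

namespace DoubleAlgebra

variable (D : DoubleAlgebra k A)

def IR : Set A := {x | ∀ a, D.hmul x a = D.hmul x (D.PhiB (D.PhiR a))}

theorem PhiR_PhiB_PhiR (a : A) : D.PhiR (D.PhiB (D.PhiR a)) = D.PhiR a := by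
  simpa only [PhiR, PhiB, D.vmul_e] using (D.A6 a D.e).symm

theorem PhiR_PhiT_PhiR (a : A) : D.PhiR (D.PhiT (D.PhiR a)) = D.PhiR a := by
  simpa only [PhiR, PhiT, D.e_vmul] using (D.A5 D.e a).symm

theorem range_PhiL_subset_IR : Set.range D.PhiL ⊆ D.IR := by
  rintro _ ⟨b, rfl⟩ a
  simp only [PhiL, D.hmul_assoc]
  exact congrArg (D.hmul b) (D.PhiR_PhiB_PhiR a).symm

theorem PhiR_vmul_of_mem_IR {x : A} (hx : x ∈ D.IR) (a : A) :
    D.vmul (D.PhiR a) x = D.hmul x a := by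
  have h := D.A4 x (D.PhiR a)
  rw [← PhiB, ← PhiR, PhiR_PhiB_PhiR] at h
  rw [← h, hx a]

theorem vmul_PhiR_of_mem_IR {x : A} (hx : x ∈ D.IR) (a : A) :
    D.vmul x (D.PhiR a) = D.hmul x a := by
  calc D.vmul x (D.PhiR a) = D.hmul x (D.PhiT (D.PhiR a)) := D.A5 x a
    _ = D.hmul x (D.PhiB (D.PhiR (D.PhiT (D.PhiR a)))) := hx _
    _ = D.hmul x a := by rw [PhiR_PhiT_PhiR, ← hx a]

end DoubleAlgebra

/-- `L ⊆ 𝓘_R ⊆ Cnt_V(R)` where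
`𝓘_R = {x | x ⋆ a = x ⋆ Φ_BΦ_R(a) for all a}`. -/
theorem stmt7 (D : DoubleAlgebra k A) :
    (∀ l ∈ Set.range D.PhiL, ∀ a, D.hmul l a = D.hmul l (D.PhiB (D.PhiR a))) ∧
    (∀ l' : A, (∀ a, D.hmul l' a = D.hmul l' (D.PhiB (D.PhiR a))) →
      ∀ a, D.vmul l' (D.PhiR a) = D.vmul (D.PhiR a) l') :=
  ⟨D.range_PhiL_subset_IR, fun _ hx a =>
    (D.vmul_PhiR_of_mem_IR hx a).trans (D.PhiR_vmul_of_mem_IR hx a).symm⟩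
end

section
/- In any double algebra, an element $r \in R$ is invertible in the vertical algebra $V$ if and only if it has an inverse lying in $R$; more precisely, if $v\circ r = e = r\circ v$ for some $v \in A$ then $\Phi_R\Phi_T(v) = \Phi_R\Phi_B(v) = r^{-1} \in R$ is a two-sided vertical inverse of $r$. -/
variable {k A : Type*} [CommRing k] [AddCommGroup A] [Module k A]

/-! For `r ∈ R` the axioms A4–A7 let the vertical products `a ∘ r` and `r ∘ a` be computed
horizontally, as `a ⋆ Φ_T(r)` and `a ⋆ Φ_B(r)`. Hence `Φ_RΦ_T` is multiplicative against `r` on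
the right and `Φ_RΦ_B` on the left, so they carry the vertical inverse `v` of `r` to a left and a
right inverse of `r` lying in `R`, which then coincide. -/

namespace DoubleAlgebra

variable (D : DoubleAlgebra k A)

theorem PhiR_PhiT_e : D.PhiR (D.PhiT D.e) = D.e := by
  rw [PhiT, vmul_e, PhiR, hmul_i]

theorem PhiR_PhiB_e : D.PhiR (D.PhiB D.e) = D.e := by
  rw [PhiB, e_vmul, PhiR, hmul_i]

theorem vmul_left_inv_eq_right_inv {r w w' : A} (hw : D.vmul w r = D.e)
    (hw' : D.vmul r w' = D.e) : w = w' := by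
  calc w = D.vmul w (D.vmul r w') := by rw [hw', vmul_e]
    _ = w' := by rw [← vmul_assoc, hw, e_vmul]

variable {D} {r : A}

theorem PhiR_PhiT_of_mem_range_PhiR (hr : r ∈ Set.range D.PhiR) : D.PhiR (D.PhiT r) = r := by
  obtain ⟨x, rfl⟩ := hr
  exact (D.e_vmul _).symm.trans (D.A5 D.e x) |>.symm

theorem PhiR_PhiB_of_mem_range_PhiR (hr : r ∈ Set.range D.PhiR) : D.PhiR (D.PhiB r) = r := by
  obtain ⟨x, rfl⟩ := hr
  exact (D.vmul_e _).symm.trans (D.A6 x D.e) |>.symm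

theorem hmul_PhiT_of_mem_range_PhiR (hr : r ∈ Set.range D.PhiR) (a : A) :
    D.hmul a (D.PhiT r) = D.vmul a r := by
  rw [PhiT, A7, ← PhiT, ← PhiR, PhiR_PhiT_of_mem_range_PhiR hr]

theorem hmul_PhiB_of_mem_range_PhiR (hr : r ∈ Set.range D.PhiR) (a : A) :
    D.hmul a (D.PhiB r) = D.vmul r a := by
  rw [PhiB, A4, ← PhiB, ← PhiR, PhiR_PhiB_of_mem_range_PhiR hr]

theorem PhiR_PhiT_vmul_of_mem_range_PhiR (hr : r ∈ Set.range D.PhiR) (v : A) :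
    D.vmul (D.PhiR (D.PhiT v)) r = D.PhiR (D.PhiT (D.vmul v r)) := by
  rw [← hmul_PhiT_of_mem_range_PhiR hr, PhiR, hmul_assoc, hmul_PhiT_of_mem_range_PhiR hr,
    PhiT, PhiT, vmul_assoc, PhiR]

theorem vmul_PhiR_PhiB_of_mem_range_PhiR (hr : r ∈ Set.range D.PhiR) (v : A) :
    D.vmul r (D.PhiR (D.PhiB v)) = D.PhiR (D.PhiB (D.vmul r v)) := by
  rw [← hmul_PhiB_of_mem_range_PhiR hr, PhiR, hmul_assoc, hmul_PhiB_of_mem_range_PhiR hr,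
    PhiB, PhiB, vmul_assoc, PhiR]

theorem PhiR_PhiT_inverse_of_mem_range_PhiR (hr : r ∈ Set.range D.PhiR) {v : A}
    (hvr : D.vmul v r = D.e) (hrv : D.vmul r v = D.e) :
    D.PhiR (D.PhiT v) = D.PhiR (D.PhiB v) ∧
      D.vmul (D.PhiR (D.PhiT v)) r = D.e ∧ D.vmul r (D.PhiR (D.PhiT v)) = D.e := by
  have left : D.vmul (D.PhiR (D.PhiT v)) r = D.e := by
    rw [PhiR_PhiT_vmul_of_mem_range_PhiR hr, hvr, PhiR_PhiT_e]
  have right : D.vmul r (D.PhiR (D.PhiB v)) = D.e := by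
    rw [vmul_PhiR_PhiB_of_mem_range_PhiR hr, hrv, PhiR_PhiB_e]
  have same := D.vmul_left_inv_eq_right_inv left right
  exact ⟨same, left, same ▸ right⟩

end DoubleAlgebra

/-- `r ∈ R` is invertible in `V` iff it has an inverse in `R`;
moreover if `v∘r = e = r∘v` then `Φ_RΦ_T(v) = Φ_RΦ_B(v)` is a two-sided vertical
inverse of `r` lying in `R`. -/
theorem stmt8 (D : DoubleAlgebra k A) (r : A) (hr : r ∈ Set.range D.PhiR) :
    ((∃ v, D.vmul v r = D.e ∧ D.vmul r v = D.e) ↔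
      (∃ w ∈ Set.range D.PhiR, D.vmul w r = D.e ∧ D.vmul r w = D.e)) ∧
    (∀ v, D.vmul v r = D.e → D.vmul r v = D.e →
      D.PhiR (D.PhiT v) = D.PhiR (D.PhiB v) ∧
      D.PhiR (D.PhiT v) ∈ Set.range D.PhiR ∧
      D.vmul (D.PhiR (D.PhiT v)) r = D.e ∧
      D.vmul r (D.PhiR (D.PhiT v)) = D.e) := by
  have inverse {v : A} := DoubleAlgebra.PhiR_PhiT_inverse_of_mem_range_PhiR (v := v) hr
  refine ⟨⟨fun ⟨v, hvr, hrv⟩ => ⟨_, Set.mem_range_self _, (inverse hvr hrv).2⟩,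
    fun ⟨w, _, hwr, hrw⟩ => ⟨w, hwr, hrw⟩⟩, fun v hvr hrv => ?_⟩
  obtain ⟨same, left, right⟩ := inverse hvr hrv
  exact ⟨same, Set.mem_range_self _, left, right⟩
end

section
/- Let $A = M_n(k)$ be the full matrix algebra over a commutative ring $k$ with matrix units $e_{jk}$. Define $x\circ y$ to be ordinary matrix multiplication with unit $e = \sum_j e_{jj}$, and define $\star$ to be the Hadamard (entrywise) product, determined by $e_{jk}\star e_{lm} = \delta_{jl}\delta_{km}e_{jk}$, with unit $i = \sum_{j,k} e_{jk}$. Then $(A, \circ, e, \star, i)$ is a double algebra. -/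
variable {k A : Type*} [CommRing k] [AddCommGroup A] [Module k A]

namespace Matrix

section Hadamard

variable {α m n : Type*} [Fintype m] [DecidableEq m]

theorem replicateCol_hadamard [NonUnitalNonAssocSemiring α] (u : m → α) (M : Matrix m n α) :
    replicateCol n u ⊙ M = diagonal u * M := by
  ext i j
  simp [diagonal_mul]

theorem hadamard_replicateCol [NonUnitalNonAssocCommSemiring α] (M : Matrix m n α) (u : m → α) :
    M ⊙ replicateCol n u = diagonal u * M := by
  rw [hadamard_comm, replicateCol_hadamard]

theorem hadamard_replicateRow [NonUnitalNonAssocSemiring α] (M : Matrix n m α) (v : m → α) :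
    M ⊙ replicateRow n v = M * diagonal v := by
  ext i j
  simp [mul_diagonal]

theorem replicateRow_hadamard [NonUnitalNonAssocCommSemiring α] (v : m → α) (M : Matrix n m α) :
    replicateRow n v ⊙ M = M * diagonal v := by
  rw [hadamard_comm, hadamard_replicateRow]

end Hadamard

section AllOnes

variable {α l m n : Type*} [NonAssocSemiring α]

theorem mul_of_one [Fintype n] (M : Matrix m n α) :
    M * of (fun _ _ => 1 : n → l → α) = replicateCol l fun i => ∑ j, M i j := by
  ext i j
  simp [mul_apply]

theorem of_one_mul [Fintype m] (M : Matrix m n α) :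
    of (fun _ _ => 1 : l → m → α) * M = replicateRow l fun j => ∑ i, M i j := by
  ext i j
  simp [mul_apply]

theorem diagonal_mul_of_one [Fintype m] [DecidableEq m] (d : m → α) :
    diagonal d * of (fun _ _ => 1 : m → n → α) = replicateCol n d := by
  ext i j
  simp [diagonal_mul]

theorem of_one_mul_diagonal [Fintype m] [DecidableEq m] (d : m → α) :
    of (fun _ _ => 1 : n → m → α) * diagonal d = replicateRow n d := by
  ext i j
  simp [mul_diagonal]

end AllOnes

def hadamardₗ {R m n : Type*} [CommSemiring R] :
    Matrix m n R →ₗ[R] Matrix m n R →ₗ[R] Matrix m n R :=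
  LinearMap.mk₂ R hadamard (fun M N P => add_hadamard P M N) (fun c M N => smul_hadamard M N c)
    (fun M N P => hadamard_add M N P) (fun c M N => hadamard_smul M N c)

def doubleAlgebra {R m : Type*} [CommRing R] [Fintype m] [DecidableEq m] :
    DoubleAlgebra R (Matrix m m R) where
  vmul := LinearMap.mul R _
  hmul := hadamardₗ
  e := 1
  i := of fun _ _ => 1
  vmul_assoc := mul_assoc
  hmul_assoc a b c := hadamard_assoc a b c
  vmul_e := mul_one
  e_vmul := one_mul
  hmul_i := hadamard_of_one
  i_hmul := of_one_hadamard
  A1 a b := by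
    change a ⊙ 1 * b = (a ⊙ 1 * of fun _ _ => 1) ⊙ b
    rw [hadamard_one, diagonal_mul_of_one, replicateCol_hadamard]
  A2 a b := by
    change a * b ⊙ 1 = ((of fun _ _ => 1) * b ⊙ 1) ⊙ a
    rw [hadamard_one, of_one_mul_diagonal, replicateRow_hadamard]
  A3 a b := by
    change (a * of fun _ _ => 1) ⊙ b = (a * of fun _ _ => 1) ⊙ 1 * b
    rw [mul_of_one, replicateCol_hadamard, replicateCol_hadamard, mul_one]
  A4 a b := by
    change a ⊙ (b * of fun _ _ => 1) = 1 ⊙ (b * of fun _ _ => 1) * a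
    rw [mul_of_one, hadamard_replicateCol, hadamard_replicateCol, mul_one]
  A5 a b := by
    change a * 1 ⊙ b = a ⊙ ((of fun _ _ => 1) * 1 ⊙ b)
    rw [one_hadamard, of_one_mul_diagonal, hadamard_replicateRow]
  A6 a b := by
    change 1 ⊙ a * b = b ⊙ (1 ⊙ a * of fun _ _ => 1)
    rw [one_hadamard, diagonal_mul_of_one, hadamard_replicateCol]
  A7 a b := by
    change a ⊙ ((of fun _ _ => 1) * b) = a * 1 ⊙ ((of fun _ _ => 1) * b)
    rw [of_one_mul, hadamard_replicateRow, hadamard_replicateRow, one_mul]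
  A8 a b := by
    change ((of fun _ _ => 1) * a) ⊙ b = b * ((of fun _ _ => 1) * a) ⊙ 1
    rw [of_one_mul, replicateRow_hadamard, replicateRow_hadamard, one_mul]

end Matrix

/-- the full matrix algebra `M_n(k)` with the ordinary matrix product
as vertical product (unit the identity matrix) and the Hadamard (entrywise) product
as horizontal product (unit the all-ones matrix) is a double algebra. -/
theorem stmt12 {n : ℕ} :
    ∃ D : DoubleAlgebra k (Matrix (Fin n) (Fin n) k),
      (∀ a b : Matrix (Fin n) (Fin n) k, D.vmul a b = a * b) ∧
      (∀ a b : Matrix (Fin n) (Fin n) k, D.hmul a b = Matrix.hadamard a b) ∧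
      D.e = (1 : Matrix (Fin n) (Fin n) k) ∧
      D.i = Matrix.of (fun _ _ => (1 : k)) :=
  ⟨Matrix.doubleAlgebra, fun _ _ => rfl, fun _ _ => rfl, rfl, rfl⟩
end

section
/- For the matrix double algebra $A = M_n(k)$ with vertical product = matrix multiplication and horizontal product = Hadamard product, the base homomorphisms are $\Phi_L(e_{jk}) = \Phi_R(e_{jk}) = \delta_{jk}e_{jk}$ (diagonal projection), $\Phi_B(e_{jk}) = \sum_l e_{jl}$, and $\Phi_T(e_{jk}) = \sum_l e_{lk}$, and the transpose map $S(e_{jk}) = e_{kj}$ is an antipode, i.e., it satisfies $\Phi_B(a'\star(a''\circ a)) = \Phi_B((a'\circ S(a))\star a'')$, $\Phi_R(a'\circ(a\star a'')) = \Phi_R((S(a)\star a')\circ a'')$, $\Phi_L((a'\star a)\circ a'') = \Phi_L(a'\circ(a''\star S(a)))$, and $\Phi_T((a\circ a')\star a'') = \Phi_T(a'\star(S(a)\circ a''))$ for all $a, a', a'' \in A$. -/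
open Matrix

variable {k : Type*} [CommRing k] {n : ℕ}

/-- The all-ones matrix, the horizontal (Hadamard) unit. -/
def allOnes (k : Type*) [CommRing k] (n : ℕ) : Matrix (Fin n) (Fin n) k :=
  Matrix.of fun _ _ => 1

/-- `Φ_L(a) = a ⋆ e` for the matrix double algebra (Hadamard with the identity). -/
def mPhiL (a : Matrix (Fin n) (Fin n) k) : Matrix (Fin n) (Fin n) k :=
  Matrix.hadamard a 1

/-- `Φ_R(a) = e ⋆ a`. -/
def mPhiR (a : Matrix (Fin n) (Fin n) k) : Matrix (Fin n) (Fin n) k :=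
  Matrix.hadamard 1 a

/-- `Φ_B(a) = a ∘ i`. -/
def mPhiB (a : Matrix (Fin n) (Fin n) k) : Matrix (Fin n) (Fin n) k :=
  a * allOnes k n

/-- `Φ_T(a) = i ∘ a`. -/
def mPhiT (a : Matrix (Fin n) (Fin n) k) : Matrix (Fin n) (Fin n) k :=
  allOnes k n * a

/-! The base maps read off row sums (`Φ_B`), column sums (`Φ_T`) and the diagonal (`Φ_L`, `Φ_R`).
The row sums of `A ⊙ B` are the diagonal entries of `A * Bᵀ`, and dually for columns, so each
antipode identity for the transpose reduces to associativity of the matrix product or to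
associativity and commutativity of the Hadamard product. -/

namespace Matrix

variable {ι κ R : Type*} [Mul R] [AddCommMonoid R]

theorem sum_hadamard_row [Fintype κ] (A B : Matrix ι κ R) (i : ι) :
    ∑ j, (A ⊙ B) i j = (A * Bᵀ) i i := by
  simp only [hadamard_apply, mul_apply, transpose_apply]

theorem sum_hadamard_col [Fintype ι] (A B : Matrix ι κ R) (j : κ) :
    ∑ i, (A ⊙ B) i j = (Aᵀ * B) j j := by
  simp only [hadamard_apply, mul_apply, transpose_apply]

theorem diag_mul_eq_sum_hadamard [Fintype κ] (A : Matrix ι κ R) (B : Matrix κ ι R) (i : ι) :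
    (A * B).diag i = ∑ j, (A ⊙ Bᵀ) i j := by
  rw [sum_hadamard_row, transpose_transpose, diag_apply]

end Matrix

theorem mPhiL_eq_diagonal_diag (a : Matrix (Fin n) (Fin n) k) :
    mPhiL a = diagonal a.diag :=
  hadamard_one a

theorem mPhiR_eq_diagonal_diag (a : Matrix (Fin n) (Fin n) k) :
    mPhiR a = diagonal a.diag :=
  one_hadamard a

theorem mPhiB_apply (a : Matrix (Fin n) (Fin n) k) (i j : Fin n) :
    mPhiB a i j = ∑ m, a i m := by
  simp only [mPhiB, allOnes, mul_apply, of_apply, mul_one]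

theorem mPhiT_apply (a : Matrix (Fin n) (Fin n) k) (i j : Fin n) :
    mPhiT a i j = ∑ m, a m j := by
  simp only [mPhiT, allOnes, mul_apply, of_apply, one_mul]

theorem diagonal_diag_single (j l : Fin n) :
    diagonal (single j l (1 : k)).diag = if j = l then single j l 1 else 0 := by
  split_ifs with h
  · subst h
    rw [diag_single_same, diagonal_single]
  · rw [diag_single_of_ne j l 1 h]
    exact diagonal_zero

theorem mPhiB_single (j l : Fin n) :
    mPhiB (single j l (1 : k)) = ∑ m, single j m 1 := by
  ext i i'
  simp only [mPhiB_apply, Matrix.sum_apply, single_apply, ite_and, Finset.sum_ite_irrel,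
    Finset.sum_ite_eq, Finset.sum_ite_eq', Finset.mem_univ, if_true, Finset.sum_const_zero]

theorem mPhiT_single (j l : Fin n) :
    mPhiT (single j l (1 : k)) = ∑ m, single m l 1 := by
  ext i i'
  simp only [mPhiT_apply, Matrix.sum_apply, single_apply, ite_and, Finset.sum_ite_eq,
    Finset.sum_ite_eq', Finset.mem_univ, if_true]

section Antipode

variable (a a' a'' : Matrix (Fin n) (Fin n) k)

theorem mPhiB_hadamard_mul_transpose :
    mPhiB (a' ⊙ (a'' * a)) = mPhiB ((a' * aᵀ) ⊙ a'') := by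
  ext i j
  rw [mPhiB_apply, mPhiB_apply, sum_hadamard_row, sum_hadamard_row, transpose_mul, mul_assoc]

theorem mPhiT_hadamard_mul_transpose :
    mPhiT ((a * a') ⊙ a'') = mPhiT (a' ⊙ (aᵀ * a'')) := by
  ext i j
  rw [mPhiT_apply, mPhiT_apply, sum_hadamard_col, sum_hadamard_col, transpose_mul, mul_assoc]

theorem mPhiR_mul_hadamard_transpose :
    mPhiR (a' * (a ⊙ a'')) = mPhiR ((aᵀ ⊙ a') * a'') := by
  rw [mPhiR_eq_diagonal_diag, mPhiR_eq_diagonal_diag]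
  congr 1
  ext i
  rw [diag_mul_eq_sum_hadamard, diag_mul_eq_sum_hadamard, transpose_hadamard,
    hadamard_comm aᵀ a', hadamard_assoc]

theorem mPhiL_hadamard_mul_transpose :
    mPhiL ((a' ⊙ a) * a'') = mPhiL (a' * (a'' ⊙ aᵀ)) := by
  rw [mPhiL_eq_diagonal_diag, mPhiL_eq_diagonal_diag]
  congr 1
  ext i
  rw [diag_mul_eq_sum_hadamard, diag_mul_eq_sum_hadamard, transpose_hadamard,
    transpose_transpose, hadamard_assoc, hadamard_comm a]

end Antipode

/-- in the matrix double algebra `M_n(k)` the base homomorphisms act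
on matrix units by `Φ_L(e_{jl}) = Φ_R(e_{jl}) = δ_{jl} e_{jl}`,
`Φ_B(e_{jl}) = ∑_m e_{jm}`, `Φ_T(e_{jl}) = ∑_m e_{ml}`, and the transpose map is an
antipode, i.e. satisfies the four defining identities of a double-algebra antipode
(with `∘` = matrix product, `⋆` = Hadamard product). -/
theorem stmt13 :
    (∀ j l : Fin n, mPhiL (Matrix.single j l (1 : k)) =
      if j = l then Matrix.single j l (1 : k) else 0) ∧
    (∀ j l : Fin n, mPhiR (Matrix.single j l (1 : k)) =
      if j = l then Matrix.single j l (1 : k) else 0) ∧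
    (∀ j l : Fin n, mPhiB (Matrix.single j l (1 : k)) =
      ∑ m : Fin n, Matrix.single j m (1 : k)) ∧
    (∀ j l : Fin n, mPhiT (Matrix.single j l (1 : k)) =
      ∑ m : Fin n, Matrix.single m l (1 : k)) ∧
    (∀ a a' a'' : Matrix (Fin n) (Fin n) k,
      mPhiB (Matrix.hadamard a' (a'' * a)) =
        mPhiB (Matrix.hadamard (a' * aᵀ) a'')) ∧
    (∀ a a' a'' : Matrix (Fin n) (Fin n) k,
      mPhiR (a' * Matrix.hadamard a a'') =
        mPhiR (Matrix.hadamard aᵀ a' * a'')) ∧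
    (∀ a a' a'' : Matrix (Fin n) (Fin n) k,
      mPhiL (Matrix.hadamard a' a * a'') =
        mPhiL (a' * Matrix.hadamard a'' aᵀ)) ∧
    (∀ a a' a'' : Matrix (Fin n) (Fin n) k,
      mPhiT (Matrix.hadamard (a * a') a'') =
        mPhiT (Matrix.hadamard a' (aᵀ * a''))) := by
  refine ⟨fun j l => ?_, fun j l => ?_, mPhiB_single, mPhiT_single,
    mPhiB_hadamard_mul_transpose, mPhiR_mul_hadamard_transpose,
    mPhiL_hadamard_mul_transpose, mPhiT_hadamard_mul_transpose⟩
  · rw [mPhiL_eq_diagonal_diag, diagonal_diag_single]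
  · rw [mPhiR_eq_diagonal_diag, diagonal_diag_single]
end

section
/- Let $G \rightrightarrows O$ be a finite groupoid and $k$ a field. On the groupoid algebra $A = kG$ define $g\circ g' = gg'$ (groupoid composition extended by zero when not composable), with unit $e = \sum_{x\in O} x$, and $g\star g' = \delta_{g,g'}\, g$ (pointwise product on the basis), with unit $i = \sum_{g\in G} g$. Then $(A, \circ, e, \star, i)$ is a double algebra. -/
/-!
Write elements of `kG` as coefficient functions on arrows, so that
`(f ∘ g)(r) = ∑_{p ≫ q = r} f p * g q`. Since every arrow is invertible, the factorisations of
`r` are parametrised by their first factor `p` (any arrow with the source of `r`, then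
`q = p⁻¹ ≫ r`), or equally by their last factor. Hence a function supported on identities, such as
`a ⋆ e`, acts by rescaling: `((a ⋆ e) ∘ b)(r) = a(1_{s r}) b(r)` and
`(a ∘ (b ⋆ e))(r) = a(r) b(1_{t r})`; and `(a ∘ i)(r)` depends only on the source of `r`,
`(i ∘ a)(r)` only on its target. Each of A1–A8 then becomes a pointwise identity in `k`.
-/

open CategoryTheory

variable {k : Type*} [Field k] {G : Type*} [Groupoid G] [Fintype G] [DecidableEq G]
  [Fintype (Σ x : G, Σ y : G, x ⟶ y)] [DecidableEq (Σ x : G, Σ y : G, x ⟶ y)]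

/-- The vertical (groupoid-algebra) product on `kG = (arrows of G) → k`:
`g ∘ g' = gg'`, the composite when the arrows are composable and `0` otherwise,
extended bilinearly. -/
def gVmul (f g : (Σ x : G, Σ y : G, x ⟶ y) → k) : (Σ x : G, Σ y : G, x ⟶ y) → k :=
  fun r =>
    ∑ p : (Σ x : G, Σ y : G, x ⟶ y), ∑ q : (Σ x : G, Σ y : G, x ⟶ y),
      if h : p.2.1 = q.1 then
        (if r = ⟨p.1, q.2.1, p.2.2 ≫ eqToHom h ≫ q.2.2⟩ then f p * g q else 0)
      else 0

/-- The horizontal product on `kG`: `g ⋆ g' = δ_{g,g'} g`, i.e. the pointwise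
product of coefficient functions. -/
def gHmul (f g : (Σ x : G, Σ y : G, x ⟶ y) → k) : (Σ x : G, Σ y : G, x ⟶ y) → k :=
  fun r => f r * g r

/-- The vertical unit `e = ∑_{x ∈ O} x`, the sum of the identity arrows. -/
def gE : (Σ x : G, Σ y : G, x ⟶ y) → k :=
  fun r => ∑ x : G, if r = ⟨x, x, 𝟙 x⟩ then (1 : k) else 0

/-- The horizontal unit `i = ∑_{g ∈ G} g`, the sum of all arrows. -/
def gI : (Σ x : G, Σ y : G, x ⟶ y) → k := fun _ => 1

section
-- Redeclared so that each lemma below carries only the finiteness and decidability instances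
-- it uses.
variable {k : Type*} [Field k] {G : Type*} [Groupoid G]

local notation "𝔸" => Σ x : G, Σ y : G, x ⟶ y

lemma arrow_eq_comp_iff_eq_inv_comp {x y v : G} (φ : x ⟶ y) (ρ : x ⟶ v) (q : 𝔸) (h : y = q.1) :
    (⟨x, v, ρ⟩ : 𝔸) = ⟨x, q.2.1, φ ≫ eqToHom h ≫ q.2.2⟩ ↔
      q = ⟨y, v, Groupoid.inv φ ≫ ρ⟩ := by
  obtain ⟨a, b, ψ⟩ := q
  obtain rfl : y = a := h
  simp only [eqToHom_refl, Category.id_comp, Sigma.mk.injEq, heq_eq_eq, true_and]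
  constructor <;> rintro ⟨rfl, rfl⟩ <;> simp

lemma arrow_eq_comp_iff_eq_comp_inv {u a b : G} (ψ : a ⟶ b) (ρ : u ⟶ b) (p : 𝔸) (h : p.2.1 = a) :
    (⟨u, b, ρ⟩ : 𝔸) = ⟨p.1, b, p.2.2 ≫ eqToHom h ≫ ψ⟩ ↔
      p = ⟨u, a, ρ ≫ Groupoid.inv ψ⟩ := by
  obtain ⟨x, y, φ⟩ := p
  obtain rfl : y = a := h
  simp only [eqToHom_refl, Category.id_comp, Sigma.mk.injEq]
  constructor <;> rintro ⟨rfl, h⟩ <;> simp_all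

lemma gHmul_apply (f g : 𝔸 → k) (r : 𝔸) : gHmul f g r = f r * g r := rfl

lemma gI_apply (r : 𝔸) : gI (k := k) r = 1 := rfl

lemma gHmul_comm (f g : 𝔸 → k) : gHmul f g = gHmul g f := funext fun r => mul_comm (f r) (g r)

lemma gHmul_gI (f : 𝔸 → k) : gHmul f gI = f := funext fun _ => mul_one _

lemma gI_gHmul (f : 𝔸 → k) : gHmul gI f = f := funext fun _ => one_mul _

section gVmul
variable [DecidableEq G] [Fintype (Σ x : G, Σ y : G, x ⟶ y)]
  [DecidableEq (Σ x : G, Σ y : G, x ⟶ y)]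

lemma gVmul_apply_eq_sum_left (f g : 𝔸 → k) (r : 𝔸) :
    gVmul f g r = ∑ p : 𝔸, if h : p.1 = r.1 then
      f p * g ⟨p.2.1, r.2.1, Groupoid.inv p.2.2 ≫ eqToHom h ≫ r.2.2⟩ else 0 := by
  refine Finset.sum_congr rfl fun ⟨x, y, φ⟩ _ => ?_
  obtain ⟨u, v, ρ⟩ := r
  by_cases hxu : x = u
  · subst hxu
    rw [dif_pos rfl, Finset.sum_eq_single ⟨y, v, Groupoid.inv φ ≫ ρ⟩]
    · simp
    · intro q _ hq
      split_ifs with h h'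
      · exact absurd ((arrow_eq_comp_iff_eq_inv_comp φ ρ q h).mp h') hq
      all_goals rfl
    · simp
  · rw [dif_neg hxu]
    refine Finset.sum_eq_zero fun q _ => ?_
    split_ifs with h h'
    · exact absurd (congrArg Sigma.fst h') (Ne.symm hxu)
    all_goals rfl

lemma gVmul_apply_eq_sum_right (f g : 𝔸 → k) (r : 𝔸) :
    gVmul f g r = ∑ q : 𝔸, if h : q.2.1 = r.2.1 then
      f ⟨r.1, q.1, r.2.2 ≫ eqToHom h.symm ≫ Groupoid.inv q.2.2⟩ * g q else 0 := by
  rw [gVmul, Finset.sum_comm]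
  refine Finset.sum_congr rfl fun ⟨a, b, ψ⟩ _ => ?_
  obtain ⟨u, v, ρ⟩ := r
  by_cases hbv : b = v
  · subst hbv
    rw [dif_pos rfl, Finset.sum_eq_single ⟨u, a, ρ ≫ Groupoid.inv ψ⟩]
    · simp
    · intro p _ hp
      split_ifs with h h'
      · exact absurd ((arrow_eq_comp_iff_eq_comp_inv ψ ρ p h).mp h') hp
      all_goals rfl
    · simp
  · rw [dif_neg hbv]
    refine Finset.sum_eq_zero fun p _ => ?_
    split_ifs with h h'
    · exact absurd (congrArg (·.2.1) h') (Ne.symm hbv)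
    all_goals rfl

lemma gVmul_gI_apply (a : 𝔸 → k) (r : 𝔸) : gVmul a gI r = gVmul a gI ⟨r.1, r.1, 𝟙 r.1⟩ := by
  simp [gVmul_apply_eq_sum_left, gI]

lemma gI_gVmul_apply (a : 𝔸 → k) (r : 𝔸) :
    gVmul gI a r = gVmul gI a ⟨r.2.1, r.2.1, 𝟙 r.2.1⟩ := by
  simp [gVmul_apply_eq_sum_right, gI]

lemma gVmul_assoc (f g c : 𝔸 → k) : gVmul (gVmul f g) c = gVmul f (gVmul g c) := by
  funext r
  rw [gVmul_apply_eq_sum_right, gVmul_apply_eq_sum_left]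
  calc _ = ∑ s : 𝔸, ∑ p : 𝔸, if h : p.1 = r.1 ∧ s.2.1 = r.2.1 then
          f p * g ⟨p.2.1, s.1, Groupoid.inv p.2.2 ≫ eqToHom h.1 ≫ r.2.2 ≫
            eqToHom h.2.symm ≫ Groupoid.inv s.2.2⟩ * c s else 0 := by
        refine Finset.sum_congr rfl fun s _ => ?_
        by_cases hs : s.2.1 = r.2.1
        · simp [hs, gVmul_apply_eq_sum_left, Finset.sum_mul]
        · simp [hs]
    _ = _ := Finset.sum_comm
    _ = _ := by
        refine Finset.sum_congr rfl fun p _ => ?_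
        by_cases hp : p.1 = r.1
        · simp [hp, gVmul_apply_eq_sum_right, Finset.mul_sum, mul_assoc]
        · simp [hp]

end gVmul

section gE
variable [Fintype G] [DecidableEq (Σ x : G, Σ y : G, x ⟶ y)]

lemma gE_apply_id (x : G) : gE (k := k) ⟨x, x, 𝟙 x⟩ = 1 := by
  rw [gE, Finset.sum_eq_single x] <;> simp_all [eq_comm]

lemma gE_apply_of_ne {r : 𝔸} (h : ∀ x, r ≠ ⟨x, x, 𝟙 x⟩) : gE (k := k) r = 0 :=
  Finset.sum_eq_zero fun x _ => if_neg (h x)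

end gE

section units
variable [Fintype G] [DecidableEq G] [Fintype (Σ x : G, Σ y : G, x ⟶ y)]
  [DecidableEq (Σ x : G, Σ y : G, x ⟶ y)]

lemma gVmul_gHmul_gE_left_apply (a b : 𝔸 → k) (r : 𝔸) :
    gVmul (gHmul a gE) b r = a ⟨r.1, r.1, 𝟙 r.1⟩ * b r := by
  rw [gVmul_apply_eq_sum_left, Finset.sum_eq_single ⟨r.1, r.1, 𝟙 r.1⟩]
  · simp [gHmul, gE_apply_id]
  · obtain ⟨u, v, ρ⟩ := r
    rintro ⟨x, y, φ⟩ _ hp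
    by_cases h : x = u
    · subst h
      have hφ : ∀ z, (⟨x, y, φ⟩ : 𝔸) ≠ ⟨z, z, 𝟙 z⟩ := by rintro z ⟨⟩; exact hp rfl
      simp [gHmul, gE_apply_of_ne hφ]
    · exact dif_neg h
  · simp

lemma gVmul_gHmul_gE_right_apply (a b : 𝔸 → k) (r : 𝔸) :
    gVmul a (gHmul b gE) r = a r * b ⟨r.2.1, r.2.1, 𝟙 r.2.1⟩ := by
  rw [gVmul_apply_eq_sum_right, Finset.sum_eq_single ⟨r.2.1, r.2.1, 𝟙 r.2.1⟩]
  · simp [gHmul, gE_apply_id]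
  · obtain ⟨u, v, ρ⟩ := r
    rintro ⟨x, y, ψ⟩ _ hq
    by_cases h : y = v
    · subst h
      have hψ : ∀ z, (⟨x, y, ψ⟩ : 𝔸) ≠ ⟨z, z, 𝟙 z⟩ := by rintro z ⟨⟩; exact hq rfl
      simp [gHmul, gE_apply_of_ne hψ]
    · exact dif_neg h
  · simp

lemma gVmul_gE (f : 𝔸 → k) : gVmul f gE = f := by
  funext r
  simpa [gI_gHmul, gI] using gVmul_gHmul_gE_right_apply f gI r

lemma gE_gVmul (f : 𝔸 → k) : gVmul gE f = f := by
  funext r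
  simpa [gI_gHmul, gI] using gVmul_gHmul_gE_left_apply gI f r

end units
end

/-- for a finite groupoid `G`, the groupoid algebra `kG` with the
convolution product `∘` (unit `e = ∑_{x∈O} x`) and the pointwise product `⋆`
(unit `i = ∑_{g∈G} g`) is a double algebra: both products are associative and
unital and axioms A1–A8 hold. -/
theorem stmt14 :
    (∀ f g h : (Σ x : G, Σ y : G, x ⟶ y) → k,
      gVmul (gVmul f g) h = gVmul f (gVmul g h)) ∧
    (∀ f : (Σ x : G, Σ y : G, x ⟶ y) → k, gVmul f gE = f ∧ gVmul gE f = f) ∧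
    (∀ f g h : (Σ x : G, Σ y : G, x ⟶ y) → k,
      gHmul (gHmul f g) h = gHmul f (gHmul g h)) ∧
    (∀ f : (Σ x : G, Σ y : G, x ⟶ y) → k, gHmul f gI = f ∧ gHmul gI f = f) ∧
    (∀ a b : (Σ x : G, Σ y : G, x ⟶ y) → k,
      gVmul (gHmul a gE) b = gHmul (gVmul (gHmul a gE) gI) b) ∧          -- A1
    (∀ a b : (Σ x : G, Σ y : G, x ⟶ y) → k,
      gVmul a (gHmul b gE) = gHmul (gVmul gI (gHmul b gE)) a) ∧          -- A2
    (∀ a b : (Σ x : G, Σ y : G, x ⟶ y) → k,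
      gHmul (gVmul a gI) b = gVmul (gHmul (gVmul a gI) gE) b) ∧          -- A3
    (∀ a b : (Σ x : G, Σ y : G, x ⟶ y) → k,
      gHmul a (gVmul b gI) = gVmul (gHmul gE (gVmul b gI)) a) ∧          -- A4
    (∀ a b : (Σ x : G, Σ y : G, x ⟶ y) → k,
      gVmul a (gHmul gE b) = gHmul a (gVmul gI (gHmul gE b))) ∧          -- A5
    (∀ a b : (Σ x : G, Σ y : G, x ⟶ y) → k,
      gVmul (gHmul gE a) b = gHmul b (gVmul (gHmul gE a) gI)) ∧          -- A6
    (∀ a b : (Σ x : G, Σ y : G, x ⟶ y) → k,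
      gHmul a (gVmul gI b) = gVmul a (gHmul gE (gVmul gI b))) ∧          -- A7
    (∀ a b : (Σ x : G, Σ y : G, x ⟶ y) → k,
      gHmul (gVmul gI a) b = gVmul b (gHmul (gVmul gI a) gE)) := by
  refine ⟨gVmul_assoc, fun f => ⟨gVmul_gE f, gE_gVmul f⟩,
    fun f g h => funext fun r => mul_assoc (f r) (g r) (h r), fun f => ⟨gHmul_gI f, gI_gHmul f⟩,
    ?A1, ?A2, ?A3, ?A4, ?A5, ?A6, ?A7, ?A8⟩
  all_goals intro a b; funext r
  case A1 => simp only [gHmul_apply, gVmul_gHmul_gE_left_apply, gI_apply, mul_one]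
  case A2 => simp only [gHmul_apply, gVmul_gHmul_gE_right_apply, gI_apply, one_mul, mul_comm]
  case A3 => rw [gHmul_apply, gVmul_gHmul_gE_left_apply, ← gVmul_gI_apply]
  case A4 => rw [gHmul_apply, gHmul_comm gE, gVmul_gHmul_gE_left_apply, ← gVmul_gI_apply, mul_comm]
  case A5 =>
    rw [gHmul_comm gE, gHmul_apply, gVmul_gHmul_gE_right_apply, gVmul_gHmul_gE_right_apply,
      gI_apply, one_mul]
  case A6 =>
    rw [gHmul_comm gE, gHmul_apply, gVmul_gHmul_gE_left_apply, gVmul_gHmul_gE_left_apply,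
      gI_apply, mul_one, mul_comm]
  case A7 => rw [gHmul_apply, gHmul_comm gE, gVmul_gHmul_gE_right_apply, ← gI_gVmul_apply]
  case A8 => rw [gHmul_apply, gVmul_gHmul_gE_right_apply, ← gI_gVmul_apply, mul_comm]
end

section
/- For the groupoid double algebra $A = kG$ of a finite groupoid, the inversion map extended linearly, $S(g) = g^{-1}$, is an antipode: it satisfies $\Phi_B(a'\star(a''\circ a)) = \Phi_B((a'\circ S(a))\star a'')$, $\Phi_R(a'\circ(a\star a'')) = \Phi_R((S(a)\star a')\circ a'')$, $\Phi_L((a'\star a)\circ a'') = \Phi_L(a'\circ(a''\star S(a)))$, and $\Phi_T((a\circ a')\star a'') = \Phi_T(a'\star(S(a)\circ a''))$ for all $a, a', a'' \in A$. -/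
open CategoryTheory

variable {k : Type*} [Field k] {G : Type*} [Groupoid G] [Fintype G] [DecidableEq G]
  [Fintype (Σ x : G, Σ y : G, x ⟶ y)] [DecidableEq (Σ x : G, Σ y : G, x ⟶ y)]

/-- The antipode `S(g) = g⁻¹` extended linearly: the coefficient of `S(f)` at an
arrow `g` is the coefficient of `f` at `g⁻¹`. -/
def gS (f : (Σ x : G, Σ y : G, x ⟶ y) → k) : (Σ x : G, Σ y : G, x ⟶ y) → k :=
  fun r => f ⟨r.2.1, r.1, Groupoid.inv r.2.2⟩

/-- `Φ_L(a) = a ⋆ e`. -/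
def gPhiL (a : (Σ x : G, Σ y : G, x ⟶ y) → k) := gHmul a (gE (k := k) (G := G))
/-- `Φ_R(a) = e ⋆ a`. -/
def gPhiR (a : (Σ x : G, Σ y : G, x ⟶ y) → k) := gHmul (gE (k := k) (G := G)) a
/-- `Φ_B(a) = a ∘ i`. -/
def gPhiB (a : (Σ x : G, Σ y : G, x ⟶ y) → k) := gVmul a (gI (k := k) (G := G))
/-- `Φ_T(a) = i ∘ a`. -/
def gPhiT (a : (Σ x : G, Σ y : G, x ⟶ y) → k) := gVmul (gI (k := k) (G := G)) a

lemma ginv_inv {x y : G} (p : x ⟶ y) : Groupoid.inv (Groupoid.inv p) = p := by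
  simp [Groupoid.inv_eq_inv]

/-- inversion as an equiv of hom sets -/
def einv (x y : G) : (x ⟶ y) ≃ (y ⟶ x) where
  toFun := Groupoid.inv
  invFun := Groupoid.inv
  left_inv := ginv_inv
  right_inv := ginv_inv

/-- post-composition equiv -/
def ecomp {y z : G} (v : y ⟶ z) (x : G) : (x ⟶ y) ≃ (x ⟶ z) where
  toFun p := p ≫ v
  invFun p := p ≫ Groupoid.inv v
  left_inv p := by simp [Groupoid.inv_eq_inv]
  right_inv p := by simp [Groupoid.inv_eq_inv]

/-- pre-composition equiv -/
def ecompl {x y : G} (v : x ⟶ y) (z : G) : (y ⟶ z) ≃ (x ⟶ z) where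
  toFun p := v ≫ p
  invFun p := Groupoid.inv v ≫ p
  left_inv p := by simp [Groupoid.inv_eq_inv]
  right_inv p := by simp [Groupoid.inv_eq_inv]


noncomputable instance homFintype (x y : G) : Fintype (x ⟶ y) :=
  Fintype.ofInjective (fun g => (⟨x, y, g⟩ : Σ x : G, Σ y : G, x ⟶ y))
    (fun g h e => by simpa using e)

lemma univ_eq_sigma_univ {α : Type*} {β : α → Type*} [Fintype (Sigma β)] [DecidableEq α]
    [Fintype α] [∀ a, Fintype (β a)] :
    (Finset.univ : Finset (Sigma β)) = Finset.univ.sigma (fun _ => Finset.univ) :=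
  by
  apply Eq.symm
  rw [Finset.eq_univ_iff_forall]
  intro p
  exact Finset.mem_sigma.mpr ⟨Finset.mem_univ _, Finset.mem_univ _⟩

lemma sum_arr {M : Type*} [AddCommMonoid M] (F : (Σ x : G, Σ y : G, x ⟶ y) → M) :
    ∑ p : (Σ x : G, Σ y : G, x ⟶ y), F p = ∑ a : G, ∑ b : G, ∑ pf : a ⟶ b, F ⟨a, b, pf⟩ := by
  rw [univ_eq_sigma_univ, Finset.sum_sigma]
  refine Finset.sum_congr rfl fun a _ => ?_
  rw [univ_eq_sigma_univ, Finset.sum_sigma]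

lemma sum_dite_irrel {ι M : Type*} [AddCommMonoid M] [Fintype ι] {P : Prop} [Decidable P]
    (F : ι → P → M) :
    (∑ i : ι, if h : P then F i h else 0) = if h : P then ∑ i : ι, F i h else 0 := by
  split <;> simp

lemma vmul_apply' (f g : (Σ x : G, Σ y : G, x ⟶ y) → k) (r : Σ x : G, Σ y : G, x ⟶ y) :
    gVmul f g r = ∑ p : (Σ x : G, Σ y : G, x ⟶ y),
      if h : p.1 = r.1 then
        f p * g ⟨p.2.1, r.2.1, Groupoid.inv p.2.2 ≫ eqToHom h ≫ r.2.2⟩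
      else 0 := by
  unfold gVmul
  refine Finset.sum_congr rfl fun p _ => ?_
  obtain ⟨a, b, pf⟩ := p
  obtain ⟨x, y, rf⟩ := r
  dsimp only
  by_cases h : a = x
  · subst h
    rw [dif_pos rfl]
    rw [Finset.sum_eq_single (⟨b, y, Groupoid.inv pf ≫ eqToHom rfl ≫ rf⟩ :
        Σ x : G, Σ y : G, x ⟶ y)]
    · rw [dif_pos rfl]
      dsimp only
      rw [if_pos (by simp [Groupoid.inv_eq_inv])]
    · rintro ⟨c, d, qf⟩ - hne
      dsimp only
      by_cases hbc : b = c
      · subst hbc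
        rw [dif_pos rfl]
        rw [if_neg]
        intro hEq
        rw [eqToHom_refl, Category.id_comp] at hEq
        simp only [Sigma.mk.inj_iff, heq_eq_eq, true_and] at hEq
        obtain ⟨rfl, h2⟩ := hEq
        obtain rfl := eq_of_heq h2
        exact hne (by simp [Groupoid.inv_eq_inv])
      · rw [dif_neg hbc]
    · intro habs
      exact absurd (Finset.mem_univ _) habs
  · rw [dif_neg h]
    apply Finset.sum_eq_zero
    rintro ⟨c, d, qf⟩ -
    dsimp only
    by_cases hbc : b = c
    · subst hbc
      rw [dif_pos rfl]
      rw [if_neg]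
      intro hEq
      simp only [Sigma.mk.inj_iff] at hEq
      exact h hEq.1.symm
    · rw [dif_neg hbc]


lemma vmul_apply'' (f g : (Σ x : G, Σ y : G, x ⟶ y) → k) (r : Σ x : G, Σ y : G, x ⟶ y) :
    gVmul f g r = ∑ q : (Σ x : G, Σ y : G, x ⟶ y),
      if h : q.2.1 = r.2.1 then
        f ⟨r.1, q.1, r.2.2 ≫ eqToHom h.symm ≫ Groupoid.inv q.2.2⟩ * g q
      else 0 := by
  unfold gVmul
  rw [Finset.sum_comm]
  refine Finset.sum_congr rfl fun q _ => ?_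
  obtain ⟨c, d, qf⟩ := q
  obtain ⟨x, y, rf⟩ := r
  dsimp only
  by_cases h : d = y
  · subst h
    rw [dif_pos rfl]
    rw [Finset.sum_eq_single (⟨x, c, rf ≫ eqToHom rfl ≫ Groupoid.inv qf⟩ :
        Σ x : G, Σ y : G, x ⟶ y)]
    · rw [dif_pos rfl]
      dsimp only
      rw [if_pos (by simp [Groupoid.inv_eq_inv])]
    · rintro ⟨a, b, pf⟩ - hne
      dsimp only
      by_cases hbc : b = c
      · subst hbc
        rw [dif_pos rfl]
        rw [if_neg]
        intro hEq
        rw [eqToHom_refl, Category.id_comp] at hEq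
        obtain ⟨h1, h2⟩ := Sigma.mk.inj_iff.mp hEq
        subst h1
        obtain ⟨-, h4⟩ := Sigma.mk.inj_iff.mp (eq_of_heq h2)
        obtain rfl := eq_of_heq h4
        exact hne (by simp [Groupoid.inv_eq_inv])
      · rw [dif_neg hbc]
    · intro habs
      exact absurd (Finset.mem_univ _) habs
  · rw [dif_neg h]
    apply Finset.sum_eq_zero
    rintro ⟨a, b, pf⟩ -
    dsimp only
    by_cases hbc : b = c
    · subst hbc
      rw [dif_pos rfl]
      rw [if_neg]
      intro hEq
      obtain ⟨h1, h2⟩ := Sigma.mk.inj_iff.mp hEq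
      subst h1
      obtain ⟨h3, -⟩ := Sigma.mk.inj_iff.mp (eq_of_heq h2)
      exact h h3.symm
    · rw [dif_neg hbc]

lemma vmul_sigma (f g : (Σ x : G, Σ y : G, x ⟶ y) → k) (x y : G) (rf : x ⟶ y) :
    gVmul f g ⟨x, y, rf⟩ =
      ∑ z : G, ∑ p : x ⟶ z, f ⟨x, z, p⟩ * g ⟨z, y, Groupoid.inv p ≫ rf⟩ := by
  rw [vmul_apply', sum_arr]
  simp only [sum_dite_irrel]
  rw [Fintype.sum_dite_eq']
  simp only [eqToHom_refl, Category.id_comp]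

lemma vmul_sigma' (f g : (Σ x : G, Σ y : G, x ⟶ y) → k) (x y : G) (rf : x ⟶ y) :
    gVmul f g ⟨x, y, rf⟩ =
      ∑ z : G, ∑ q : z ⟶ y, f ⟨x, z, rf ≫ Groupoid.inv q⟩ * g ⟨z, y, q⟩ := by
  rw [vmul_apply'', sum_arr]
  refine Finset.sum_congr rfl fun a _ => ?_
  simp only [sum_dite_irrel]
  rw [Fintype.sum_dite_eq']
  simp only [eqToHom_refl, Category.id_comp]

lemma phiB_apply (b : (Σ x : G, Σ y : G, x ⟶ y) → k) (x y : G) (rf : x ⟶ y) :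
    gPhiB b ⟨x, y, rf⟩ = ∑ z : G, ∑ p : x ⟶ z, b ⟨x, z, p⟩ := by
  unfold gPhiB
  rw [vmul_sigma]
  simp [gI]

lemma phiT_apply (b : (Σ x : G, Σ y : G, x ⟶ y) → k) (x y : G) (rf : x ⟶ y) :
    gPhiT b ⟨x, y, rf⟩ = ∑ z : G, ∑ q : z ⟶ y, b ⟨z, y, q⟩ := by
  unfold gPhiT
  rw [vmul_sigma']
  simp [gI]

lemma gE_eq (x y : G) (rf : x ⟶ y) :
    gE (k := k) (G := G) ⟨x, y, rf⟩ =
      if (⟨x, y, rf⟩ : Σ x : G, Σ y : G, x ⟶ y) = ⟨x, x, 𝟙 x⟩ then 1 else 0 := by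
  unfold gE
  rw [Finset.sum_eq_single x]
  · intro c _ hc
    rw [if_neg]
    intro hEq
    obtain ⟨h1, -⟩ := Sigma.mk.inj_iff.mp hEq
    exact hc h1.symm
  · intro habs
    exact absurd (Finset.mem_univ _) habs

/-- for the groupoid double algebra `kG`, linear extension of the
inversion map `S(g) = g⁻¹` is an antipode: it satisfies the four defining
identities of a double-algebra antipode. -/
theorem stmt15 :
    (∀ a a' a'' : (Σ x : G, Σ y : G, x ⟶ y) → k,
      gPhiB (gHmul a' (gVmul a'' a)) = gPhiB (gHmul (gVmul a' (gS a)) a'')) ∧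
    (∀ a a' a'' : (Σ x : G, Σ y : G, x ⟶ y) → k,
      gPhiR (gVmul a' (gHmul a a'')) = gPhiR (gVmul (gHmul (gS a) a') a'')) ∧
    (∀ a a' a'' : (Σ x : G, Σ y : G, x ⟶ y) → k,
      gPhiL (gVmul (gHmul a' a) a'') = gPhiL (gVmul a' (gHmul a'' (gS a)))) ∧
    (∀ a a' a'' : (Σ x : G, Σ y : G, x ⟶ y) → k,
      gPhiT (gHmul (gVmul a a') a'') = gPhiT (gHmul a' (gVmul (gS a) a''))) := by
  refine ⟨?_, ?_, ?_, ?_⟩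
  · -- identity 1 (Φ_B)
    intro a a' a''
    funext r
    obtain ⟨x, y, rf⟩ := r
    rw [phiB_apply, phiB_apply]
    simp only [gHmul]
    simp only [vmul_sigma']
    simp only [gS]
    simp only [Finset.mul_sum, Finset.sum_mul]
    trans (∑ z : G, ∑ w : G, ∑ v : w ⟶ z, ∑ s : x ⟶ w,
      a' ⟨x, z, s ≫ v⟩ * a'' ⟨x, w, s⟩ * a ⟨w, z, v⟩)
    · refine (Finset.sum_congr rfl fun z _ => Finset.sum_comm).trans ?_
      refine (Finset.sum_congr rfl fun z _ =>
        Finset.sum_congr rfl fun w _ => Finset.sum_comm).trans ?_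
      refine Finset.sum_congr rfl fun z _ => Finset.sum_congr rfl fun w _ =>
        Finset.sum_congr rfl fun v _ =>
        Fintype.sum_equiv (ecomp (Groupoid.inv v) x) _ _ fun p => ?_
      simp only [ecomp, Equiv.coe_fn_mk, Category.assoc, Groupoid.inv_eq_inv,
        IsIso.inv_hom_id, Category.comp_id]
      ring
    · symm
      refine (Finset.sum_congr rfl fun z _ => Finset.sum_congr rfl fun p _ =>
        Finset.sum_congr rfl fun w _ =>
        Fintype.sum_equiv (einv w z)
          (fun v => a' ⟨x, w, p ≫ Groupoid.inv v⟩ * a ⟨z, w, Groupoid.inv v⟩ *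
            a'' ⟨x, z, p⟩)
          (fun u => a' ⟨x, w, p ≫ u⟩ * a ⟨z, w, u⟩ * a'' ⟨x, z, p⟩)
          (fun v => rfl)).trans ?_
      refine (Finset.sum_congr rfl fun z _ => Finset.sum_comm).trans ?_
      refine Finset.sum_comm.trans ?_
      refine (Finset.sum_congr rfl fun w _ =>
        Finset.sum_congr rfl fun z _ => Finset.sum_comm).trans ?_
      refine Finset.sum_congr rfl fun w _ => Finset.sum_congr rfl fun z _ =>
        Finset.sum_congr rfl fun u _ => Finset.sum_congr rfl fun p _ => ?_
      ring
  · -- identity 2 (Φ_R)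
    intro a a' a''
    funext r
    obtain ⟨x, y, rf⟩ := r
    simp only [gPhiR, gHmul]
    rw [gE_eq]
    by_cases hid : (⟨x, y, rf⟩ : Σ x : G, Σ y : G, x ⟶ y) = ⟨x, x, 𝟙 x⟩
    · rw [if_pos hid]
      obtain ⟨-, h2⟩ := Sigma.mk.inj_iff.mp hid
      obtain ⟨h3, h4⟩ := Sigma.mk.inj_iff.mp (eq_of_heq h2)
      subst h3
      obtain rfl := eq_of_heq h4
      simp only [one_mul]
      rw [vmul_sigma, vmul_sigma]
      refine Finset.sum_congr rfl fun z _ => Finset.sum_congr rfl fun p _ => ?_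
      simp only [gHmul, gS, Category.comp_id]
      ring
    · simp only [if_neg hid, mul_zero, zero_mul]
  · -- identity 3 (Φ_L)
    intro a a' a''
    funext r
    obtain ⟨x, y, rf⟩ := r
    simp only [gPhiL, gHmul]
    rw [gE_eq]
    by_cases hid : (⟨x, y, rf⟩ : Σ x : G, Σ y : G, x ⟶ y) = ⟨x, x, 𝟙 x⟩
    · rw [if_pos hid]
      obtain ⟨-, h2⟩ := Sigma.mk.inj_iff.mp hid
      obtain ⟨h3, h4⟩ := Sigma.mk.inj_iff.mp (eq_of_heq h2)
      subst h3
      obtain rfl := eq_of_heq h4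
      simp only [mul_one]
      rw [vmul_sigma, vmul_sigma]
      refine Finset.sum_congr rfl fun z _ => Finset.sum_congr rfl fun p _ => ?_
      simp only [gHmul, gS, Category.comp_id, ginv_inv]
      ring
    · simp only [if_neg hid, mul_zero, zero_mul]
  · -- identity 4 (Φ_T)
    intro a a' a''
    funext r
    obtain ⟨x, y, rf⟩ := r
    rw [phiT_apply, phiT_apply]
    simp only [gHmul]
    simp only [vmul_sigma]
    simp only [gS]
    simp only [Finset.mul_sum, Finset.sum_mul]
    trans (∑ z : G, ∑ w : G, ∑ p : z ⟶ w, ∑ t : w ⟶ y,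
      a ⟨z, w, p⟩ * a' ⟨w, y, t⟩ * a'' ⟨z, y, p ≫ t⟩)
    · refine (Finset.sum_congr rfl fun z _ => Finset.sum_comm).trans ?_
      refine (Finset.sum_congr rfl fun z _ =>
        Finset.sum_congr rfl fun w _ => Finset.sum_comm).trans ?_
      refine Finset.sum_congr rfl fun z _ => Finset.sum_congr rfl fun w _ =>
        Finset.sum_congr rfl fun p _ =>
        Fintype.sum_equiv (ecompl p y).symm _ _ fun q => ?_
      simp only [ecompl, Equiv.coe_fn_symm_mk, Groupoid.inv_eq_inv,
        IsIso.hom_inv_id_assoc]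
    · symm
      refine (Finset.sum_congr rfl fun z _ => Finset.sum_congr rfl fun q _ =>
        Finset.sum_congr rfl fun w _ =>
        Fintype.sum_equiv (einv z w)
          (fun p => a' ⟨z, y, q⟩ * (a ⟨w, z, Groupoid.inv p⟩ *
            a'' ⟨w, y, Groupoid.inv p ≫ q⟩))
          (fun u => a' ⟨z, y, q⟩ * (a ⟨w, z, u⟩ * a'' ⟨w, y, u ≫ q⟩))
          (fun p => rfl)).trans ?_
      refine (Finset.sum_congr rfl fun z _ => Finset.sum_comm).trans ?_
      refine Finset.sum_comm.trans ?_
      refine (Finset.sum_congr rfl fun w _ =>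
        Finset.sum_congr rfl fun z _ => Finset.sum_comm).trans ?_
      refine Finset.sum_congr rfl fun w _ => Finset.sum_congr rfl fun z _ =>
        Finset.sum_congr rfl fun u _ => Finset.sum_congr rfl fun q _ => ?_
      ring
end

section
/- Let $H$ be a Hopf algebra over $k$ with bijective antipode and a dual pair $(\lambda, i)$ of Frobenius left integrals, and define the convolution product $a\star a' = \lambda(S^{-1}(a'_{(1)})a)\,a'_{(2)}$ with unit $i$. Then the base homomorphisms of the resulting double algebra $(H, \cdot, 1, \star, i)$ satisfy: $\Phi_L(a) = a\star 1 = 1\cdot\lambda(a)$, $\Phi_B(a) = a\cdot i = \varepsilon(a) i$; in particular the left base ideal is $k\cdot 1$ and the bottom base ideal is $k\cdot i$. -/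
open TensorProduct

variable {k H : Type*} [CommRing k] [Ring H] [HopfAlgebra k H]

/-- The convolution product `a ⋆ a' := λ(S⁻¹(a'₍₁₎) a) · a'₍₂₎`. -/
noncomputable def hstar (lam : H →ₗ[k] k) (Sinv : H →ₗ[k] H) (a a' : H) : H :=
  TensorProduct.lift
    ((LinearMap.lsmul k H) ∘ₗ lam ∘ₗ ((LinearMap.mul k H).flip a) ∘ₗ Sinv)
    (Coalgebra.comul (R := k) a')

-- Auxiliary lemmas
noncomputable def auxA (lam : H →ₗ[k] k) {n : ℕ} (E F : Fin n → H) : H →ₗ[k] H :=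
  ∑ l, (lam ∘ₗ LinearMap.mulRight k (F l)).smulRight (E l)

lemma auxA_apply (lam : H →ₗ[k] k) {n : ℕ} (E F : Fin n → H) (y : H) :
    auxA lam E F y = ∑ l, lam (y * F l) • E l := by
  simp [auxA, LinearMap.sum_apply]

lemma aux_exfin (x : H ⊗[k] H) : ∃ (m : ℕ) (p q : Fin m → H), x = ∑ j, p j ⊗ₜ[k] q j := by
  obtain ⟨Sx, hSx⟩ := TensorProduct.exists_finset (R := k) x
  refine ⟨Sx.card, fun j => ((Sx.equivFin.symm j : Sx) : H × H).1,
    fun j => ((Sx.equivFin.symm j : Sx) : H × H).2, ?_⟩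
  rw [hSx, ← Finset.sum_coe_sort Sx (fun z => z.1 ⊗ₜ[k] z.2)]
  exact (Equiv.sum_comp Sx.equivFin.symm fun z => (z : H × H).1 ⊗ₜ[k] (z : H × H).2).symm

lemma aux_hlam_fintype (lam : H →ₗ[k] k)
    (hlam : ∀ (a : H) (n : ℕ) (f g : Fin n → H),
      Coalgebra.comul (R := k) a = ∑ j, f j ⊗ₜ[k] g j →
      ∑ j, lam (g j) • f j = lam a • (1 : H))
    (a : H) (ι : Type) [Fintype ι] (p q : ι → H)
    (h : Coalgebra.comul (R := k) a = ∑ j, p j ⊗ₜ[k] q j) :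
    ∑ j, lam (q j) • p j = lam a • (1 : H) := by
  have h2 : Coalgebra.comul (R := k) a
      = ∑ j : Fin (Fintype.card ι), p ((Fintype.equivFin ι).symm j) ⊗ₜ[k] q ((Fintype.equivFin ι).symm j) := by
    rw [h]
    exact (Equiv.sum_comp (Fintype.equivFin ι).symm fun i => p i ⊗ₜ[k] q i).symm
  have h3 := hlam a _ _ _ h2
  rwa [Equiv.sum_comp (Fintype.equivFin ι).symm (fun i => lam (q i) • p i)] at h3

lemma aux_conv (lam : H →ₗ[k] k)
    (hlam : ∀ (a : H) (n : ℕ) (f g : Fin n → H),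
      Coalgebra.comul (R := k) a = ∑ j, f j ⊗ₜ[k] g j →
      ∑ j, lam (g j) • f j = lam a • (1 : H))
    (i : H) (hi₂ : ∀ a : H, lam (a * i) = Coalgebra.counit (R := k) a)
    {n : ℕ} (E F : Fin n → H) (hEF : Coalgebra.comul (R := k) i = ∑ l, E l ⊗ₜ[k] F l)
    (c : H) {m : ℕ} (pp rr : Fin m → H)
    (hc : Coalgebra.comul (R := k) c = ∑ j, pp j ⊗ₜ[k] rr j) :
    ∑ j, pp j * (auxA lam E F (rr j)) = Coalgebra.counit (R := k) c • (1 : H) := by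
  have hprod : Coalgebra.comul (R := k) (c * i)
      = ∑ x : Fin m × Fin n, (pp x.1 * E x.2) ⊗ₜ[k] (rr x.1 * F x.2) := by
    rw [Bialgebra.comul_mul, hc, hEF, Finset.sum_mul_sum, Fintype.sum_prod_type]
    simp [Algebra.TensorProduct.tmul_mul_tmul]
  have hl := aux_hlam_fintype lam hlam (c * i) (Fin m × Fin n) _ _ hprod
  rw [hi₂ c] at hl
  calc ∑ j, pp j * (auxA lam E F (rr j))
      = ∑ j, ∑ l, lam (rr j * F l) • (pp j * E l) := by
        simp [auxA_apply, Finset.mul_sum, mul_smul_comm]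
    _ = ∑ x : Fin m × Fin n, lam (rr x.1 * F x.2) • (pp x.1 * E x.2) := by
        rw [Fintype.sum_prod_type]
    _ = Coalgebra.counit (R := k) c • (1 : H) := hl

lemma aux_core (lam : H →ₗ[k] k)
    (hlam : ∀ (a : H) (n : ℕ) (f g : Fin n → H),
      Coalgebra.comul (R := k) a = ∑ j, f j ⊗ₜ[k] g j →
      ∑ j, lam (g j) • f j = lam a • (1 : H))
    (i : H) (hi₂ : ∀ a : H, lam (a * i) = Coalgebra.counit (R := k) a)
    {n : ℕ} (E F : Fin n → H) (hEF : Coalgebra.comul (R := k) i = ∑ l, E l ⊗ₜ[k] F l)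
    (y : H) :
    auxA lam E F y = HopfAlgebra.antipode (R := k) y := by
  obtain ⟨m, p, q, hpq⟩ := aux_exfin (Coalgebra.comul (R := k) y)
  choose mu u v huv using fun j : Fin m => aux_exfin (Coalgebra.comul (R := k) (p j))
  choose mw r w hrw using fun j : Fin m => aux_exfin (Coalgebra.comul (R := k) (q j))
  set Phi : H ⊗[k] (H ⊗[k] H) →ₗ[k] H :=
    LinearMap.mul' k H ∘ₗ TensorProduct.map (HopfAlgebra.antipode (R := k))
      (LinearMap.mul' k H ∘ₗ TensorProduct.map LinearMap.id (auxA lam E F)) with hPhidef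
  have hPhi : ∀ x y' z : H, Phi (x ⊗ₜ[k] (y' ⊗ₜ[k] z))
      = HopfAlgebra.antipode (R := k) x * (y' * auxA lam E F z) := by
    intro x y' z
    simp [hPhidef]
  have h3 := congrArg Phi (Coalgebra.coassoc_apply (R := k) y)
  have hL : (TensorProduct.assoc k H H H)
        ((LinearMap.rTensor H (Coalgebra.comul (R := k))) (Coalgebra.comul (R := k) y))
      = ∑ j, ∑ t, u j t ⊗ₜ[k] (v j t ⊗ₜ[k] q j) := by
    rw [hpq]
    simp only [map_sum, LinearMap.rTensor_tmul, huv, TensorProduct.sum_tmul,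
      TensorProduct.assoc_tmul]
  have hR : (LinearMap.lTensor H (Coalgebra.comul (R := k))) (Coalgebra.comul (R := k) y)
      = ∑ j, ∑ s, p j ⊗ₜ[k] (r j s ⊗ₜ[k] w j s) := by
    rw [hpq]
    simp only [map_sum, LinearMap.lTensor_tmul, hrw, TensorProduct.tmul_sum]
  rw [hL, hR] at h3
  simp only [map_sum, hPhi] at h3
  have hcounitL : ∑ j, Coalgebra.counit (R := k) (p j) • q j = y := by
    have h5 := Coalgebra.rTensor_counit_comul (R := k) y
    rw [hpq] at h5
    simp only [map_sum, LinearMap.rTensor_tmul] at h5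
    have h6 := congrArg (TensorProduct.lid k H) h5
    simpa [map_sum] using h6
  have hcounitR : ∑ j, Coalgebra.counit (R := k) (q j) • p j = y := by
    have h5 := Coalgebra.lTensor_counit_comul (R := k) y
    rw [hpq] at h5
    simp only [map_sum, LinearMap.lTensor_tmul] at h5
    have h6 := congrArg (TensorProduct.rid k H) h5
    simpa [map_sum] using h6
  have hanti : ∀ j, ∑ t, HopfAlgebra.antipode (R := k) (u j t) * v j t
      = algebraMap k H (Coalgebra.counit (R := k) (p j)) := by
    intro j
    have h4 := HopfAlgebra.mul_antipode_rTensor_comul_apply (R := k) (a := p j)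
    rw [huv j] at h4
    simpa [map_sum, LinearMap.mul'_apply] using h4
  have hLval : ∑ j, ∑ t, HopfAlgebra.antipode (R := k) (u j t) * (v j t * auxA lam E F (q j))
      = auxA lam E F y := by
    calc ∑ j, ∑ t, HopfAlgebra.antipode (R := k) (u j t) * (v j t * auxA lam E F (q j))
        = ∑ j, (∑ t, HopfAlgebra.antipode (R := k) (u j t) * v j t) * auxA lam E F (q j) := by
          simp [Finset.sum_mul, mul_assoc]
      _ = ∑ j, Coalgebra.counit (R := k) (p j) • auxA lam E F (q j) := by
          simp [hanti, Algebra.smul_def]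
      _ = auxA lam E F (∑ j, Coalgebra.counit (R := k) (p j) • q j) := by
          rw [map_sum]
          simp only [map_smul]
      _ = auxA lam E F y := by rw [hcounitL]
  have hRval : ∑ j, ∑ s, HopfAlgebra.antipode (R := k) (p j) * (r j s * auxA lam E F (w j s))
      = HopfAlgebra.antipode (R := k) y := by
    calc ∑ j, ∑ s, HopfAlgebra.antipode (R := k) (p j) * (r j s * auxA lam E F (w j s))
        = ∑ j, HopfAlgebra.antipode (R := k) (p j) * (∑ s, r j s * auxA lam E F (w j s)) := by
          simp [Finset.mul_sum]
      _ = ∑ j, HopfAlgebra.antipode (R := k) (p j) * (Coalgebra.counit (R := k) (q j) • (1 : H)) := by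
          refine Finset.sum_congr rfl fun j _ => ?_
          rw [aux_conv lam hlam i hi₂ E F hEF (q j) _ _ (hrw j)]
      _ = ∑ j, Coalgebra.counit (R := k) (q j) • HopfAlgebra.antipode (R := k) (p j) := by
          simp [mul_smul_comm]
      _ = HopfAlgebra.antipode (R := k) (∑ j, Coalgebra.counit (R := k) (q j) • p j) := by
          rw [map_sum]
          simp only [map_smul]
      _ = HopfAlgebra.antipode (R := k) y := by rw [hcounitR]
  rw [hLval, hRval] at h3
  exact h3

/-- with the convolution product of the double algebra
`(H, ·, 1, ⋆, i)` of a Hopf algebra with dual pair `(λ, i)` of Frobenius left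
integrals (normalized by `λ(i) = 1`), the base homomorphisms satisfy
`Φ_L(a) = a ⋆ 1 = λ(a)·1` and `Φ_B(a) = a·i = ε(a)·i`; in particular the left
base ideal is `k·1` and the bottom base ideal is `k·i`. -/
theorem stmt17 (lam : H →ₗ[k] k) (Sinv : H →ₗ[k] H)
    (hS₁ : ∀ a : H, HopfAlgebra.antipode (R := k) (Sinv a) = a)
    (hS₂ : ∀ a : H, Sinv (HopfAlgebra.antipode (R := k) a) = a)
    (hlam : ∀ (a : H) (n : ℕ) (f g : Fin n → H),
      Coalgebra.comul (R := k) a = ∑ j, f j ⊗ₜ[k] g j →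
      ∑ j, lam (g j) • f j = lam a • (1 : H))
    (i : H)
    (hi₁ : ∀ (n : ℕ) (f g : Fin n → H),
      Coalgebra.comul (R := k) i = ∑ j, f j ⊗ₜ[k] g j →
      ∑ j, lam (g j) • f j = (1 : H))
    (hi₂ : ∀ a : H, lam (a * i) = Coalgebra.counit (R := k) a)
    (hnorm : lam i = 1) :
    (∀ a : H, hstar lam Sinv a 1 = lam a • (1 : H)) ∧
    (∀ a : H, a * i = Coalgebra.counit (R := k) a • i) ∧
    Set.range (fun a : H => hstar lam Sinv a 1) = Set.range (fun c : k => c • (1 : H)) ∧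
    Set.range (fun a : H => a * i) = Set.range (fun c : k => c • i) := by
  classical
  -- antipode of 1 and Sinv of 1
  have hanti1 : HopfAlgebra.antipode (R := k) (1 : H) = 1 := by
    have h4 := HopfAlgebra.mul_antipode_rTensor_comul_apply (R := k) (a := (1 : H))
    rw [Bialgebra.comul_one] at h4
    simpa [Algebra.TensorProduct.one_def, LinearMap.mul'_apply] using h4
  have hSinv1 : Sinv (1 : H) = 1 := by
    have h5 := hS₂ (1 : H)
    rwa [hanti1] at h5
  -- Part 1
  have h1 : ∀ a : H, hstar lam Sinv a 1 = lam a • (1 : H) := by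
    intro a
    unfold hstar
    rw [Bialgebra.comul_one, Algebra.TensorProduct.one_def, TensorProduct.lift.tmul]
    simp [LinearMap.mul_apply', hSinv1]
  -- representation of comul i
  obtain ⟨n, E, F, hEF⟩ := aux_exfin (Coalgebra.comul (R := k) i)
  -- the endomorphism u ↦ ∑ λ(Fₗ u) • Eₗ
  set Emap : H →ₗ[k] H := ∑ l, (lam ∘ₗ LinearMap.mulLeft k (F l)).smulRight (E l) with hEmapdef
  have hEmap_apply : ∀ u : H, Emap u = ∑ l, lam (F l * u) • E l := by
    intro u
    simp [hEmapdef, LinearMap.sum_apply]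
  -- recovery: w = ∑ λ(w Fₗ) • S⁻¹(Eₗ)
  have hrecS : ∀ w : H, w = ∑ l, lam (w * F l) • Sinv (E l) := by
    intro w
    have h6 := congrArg Sinv (aux_core lam hlam i hi₂ E F hEF w)
    rw [hS₂ w, auxA_apply, map_sum] at h6
    simp only [map_smul] at h6
    exact h6.symm
  -- the key recovery a = ∑ λ(S⁻¹ a * Fₗ) • Eₗ
  have hrec : ∀ a : H, ∑ l, lam (Sinv a * F l) • E l = a := by
    intro a
    rw [← auxA_apply, aux_core lam hlam i hi₂ E F hEF, hS₁]
  -- H is a finite k-module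
  haveI hfin : Module.Finite k H := by
    refine ⟨⟨Finset.univ.image E, ?_⟩⟩
    rw [eq_top_iff]
    rintro x -
    rw [← hrec x]
    exact Submodule.sum_mem _ fun l _ => Submodule.smul_mem _ _
      (Submodule.subset_span (Finset.mem_coe.mpr
        (Finset.mem_image_of_mem E (Finset.mem_univ l))))
  -- Emap is surjective
  have hEsurj : Function.Surjective Emap := by
    intro a
    refine ⟨∑ t, lam (Sinv a * Sinv (E t)) • F t, ?_⟩
    have hu : ∀ ww : H, lam (ww * (∑ t, lam (Sinv a * Sinv (E t)) • F t))
        = lam (Sinv a * ww) := by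
      intro ww
      rw [Finset.mul_sum]
      simp only [mul_smul_comm, map_sum, map_smul, smul_eq_mul]
      conv_rhs => rw [hrecS ww]
      rw [Finset.mul_sum]
      simp only [mul_smul_comm, map_sum, map_smul, smul_eq_mul]
      exact Finset.sum_congr rfl fun t _ => mul_comm _ _
    rw [hEmap_apply]
    simp only [hu]
    exact hrec a
  -- hence injective
  have hEinj : Function.Injective Emap :=
    OrzechProperty.injective_of_surjective_endomorphism Emap hEsurj
  -- Part 2
  have h2 : ∀ a : H, a * i = Coalgebra.counit (R := k) a • i := by
    intro a
    have hzero : ∀ wr : H, lam (wr * (a * i - Coalgebra.counit (R := k) a • i)) = 0 := by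
      intro wr
      rw [mul_sub, mul_smul_comm, map_sub, map_smul, ← mul_assoc, hi₂, hi₂,
        Bialgebra.counit_mul, smul_eq_mul]
      ring
    have hE0 : Emap (a * i - Coalgebra.counit (R := k) a • i) = 0 := by
      rw [hEmap_apply]
      simp [hzero]
    have h7 : Emap (a * i - Coalgebra.counit (R := k) a • i) = Emap 0 := by
      rw [hE0, map_zero]
    have h8 := hEinj h7
    exact sub_eq_zero.mp h8
  refine ⟨h1, h2, ?_, ?_⟩
  · ext x
    constructor
    · rintro ⟨a, rfl⟩
      exact ⟨lam a, (h1 a).symm⟩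
    · rintro ⟨c, rfl⟩
      refine ⟨c • i, ?_⟩
      show hstar lam Sinv (c • i) 1 = c • (1 : H)
      rw [h1 (c • i), map_smul, hnorm, smul_eq_mul, mul_one]
  · ext x
    constructor
    · rintro ⟨a, rfl⟩
      exact ⟨Coalgebra.counit (R := k) a, (h2 a).symm⟩
    · rintro ⟨c, rfl⟩
      exact ⟨algebraMap k H c, (Algebra.smul_def c i).symm⟩
end

section
/- Let $H$ be a Hopf algebra over $k$ with a dual pair $(\lambda, i)$ of Frobenius left integrals and convolution $a\star a' = \lambda(S^{-1}(a'_{(1)})a)\,a'_{(2)}$. Then the distributivity law $a(a'\star a'') = (a_{(1)} a')\star(a_{(2)} a'')$ holds for all $a, a', a'' \in H$, where juxtaposition is the Hopf algebra multiplication. -/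
open TensorProduct

variable {k H : Type*} [CommRing k] [Ring H] [HopfAlgebra k H]

open Coalgebra HopfAlgebra LinearMap

lemma aux_counit_smul_right {ι : Type*} {a : H} (r : Coalgebra.Repr k a ι) :
    ∑ i ∈ r.index, counit (R := k) (r.left i) • r.right i = a := by
  have h2 : (TensorProduct.lid k H) (∑ i ∈ r.index, counit (R := k) (r.left i) ⊗ₜ[k] r.right i)
      = (TensorProduct.lid k H) ((1 : k) ⊗ₜ[k] a) := by
    rw [Coalgebra.sum_counit_tmul_eq r]
  simpa only [map_sum, TensorProduct.lid_tmul, one_smul] using h2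

lemma aux_counit_smul_left {ι : Type*} {a : H} (r : Coalgebra.Repr k a ι) :
    ∑ i ∈ r.index, counit (R := k) (r.right i) • r.left i = a := by
  have h2 : (TensorProduct.rid k H) (∑ i ∈ r.index, r.left i ⊗ₜ[k] counit (R := k) (r.right i))
      = (TensorProduct.rid k H) (a ⊗ₜ[k] (1 : k)) := by
    rw [Coalgebra.sum_tmul_counit_eq r]
  simpa only [map_sum, TensorProduct.rid_tmul, one_smul] using h2

/-- A representation of `comul (u*v)` from representations of `u` and `v`. -/
noncomputable def mulRepr {ι κ : Type*} {u v : H} (ru : Coalgebra.Repr k u ι)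
    (rv : Coalgebra.Repr k v κ) :
    Coalgebra.Repr k (u * v) (ι × κ) where
  index := ru.index ×ˢ rv.index
  left p := ru.left p.1 * rv.left p.2
  right p := ru.right p.1 * rv.right p.2
  eq := by
    rw [Bialgebra.comul_mul, ← ru.eq, ← rv.eq, Finset.sum_mul_sum, Finset.sum_product]
    simp [Algebra.TensorProduct.tmul_mul_tmul]

lemma sum_mul_antipode_mul {ι κ : Type*} {u v : H} (ru : Coalgebra.Repr k u ι)
    (rv : Coalgebra.Repr k v κ) :
    ∑ i ∈ ru.index, ∑ j ∈ rv.index,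
      (ru.left i * rv.left j) * antipode (R := k) (ru.right i * rv.right j)
      = (counit (R := k) u * counit (R := k) v) • (1 : H) := by
  have h := sum_mul_antipode_eq_smul (mulRepr ru rv)
  simpa [mulRepr, Finset.sum_product, Bialgebra.counit_mul] using h

lemma antipode_one' : antipode (R := k) (1 : H) = 1 := by
  have h := mul_antipode_rTensor_comul_apply (R := k) (a := (1 : H))
  simpa [Bialgebra.comul_one, Algebra.TensorProduct.one_def, Bialgebra.counit_one] using h
noncomputable def psi1 (u v w : H) : H ⊗[k] (H ⊗[k] H) →ₗ[k] H :=
  mul' k H ∘ₗ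
    TensorProduct.map (mulLeft k (antipode (R := k) u) ∘ₗ antipode (R := k))
      (mul' k H ∘ₗ TensorProduct.map (mulRight k v) (antipode (R := k) ∘ₗ mulRight k w))

@[simp] lemma psi1_tmul (u v w p q r : H) :
    psi1 u v w (p ⊗ₜ[k] (q ⊗ₜ[k] r))
      = (antipode (R := k) u * antipode (R := k) p)
        * ((q * v) * antipode (R := k) (r * w)) := by
  simp [psi1, mul'_apply]

noncomputable def psi2 (x : H) : H ⊗[k] (H ⊗[k] H) →ₗ[k] H :=
  mul' k H ∘ₗ
    TensorProduct.map (antipode (R := k))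
      (mul' k H ∘ₗ TensorProduct.map (LinearMap.id) (antipode (R := k) ∘ₗ mulLeft k x))

@[simp] lemma psi2_tmul (x p q r : H) :
    psi2 x (p ⊗ₜ[k] (q ⊗ₜ[k] r))
      = antipode (R := k) p * (q * antipode (R := k) (x * r)) := by
  simp [psi2, mul'_apply]
theorem antipode_mul_rev (x y : H) :
    antipode (R := k) (x * y) = antipode (R := k) y * antipode (R := k) x := by
  classical
  let rx := Coalgebra.Repr.arbitrary k x
  let ry := Coalgebra.Repr.arbitrary k y
  let rxL : ∀ i : H × H, Coalgebra.Repr k (rx.left i) (H × H) := fun i => Coalgebra.Repr.arbitrary k _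
  let rxR : ∀ i : H × H, Coalgebra.Repr k (rx.right i) (H × H) := fun i => Coalgebra.Repr.arbitrary k _
  let ryL : ∀ j : H × H, Coalgebra.Repr k (ry.left j) (H × H) := fun j => Coalgebra.Repr.arbitrary k _
  let ryR : ∀ j : H × H, Coalgebra.Repr k (ry.right j) (H × H) := fun j => Coalgebra.Repr.arbitrary k _
  set E : H := ∑ j ∈ ry.index, ∑ m ∈ (ryR j).index, ∑ i ∈ rx.index, ∑ l ∈ (rxR i).index,
    (antipode (R := k) (ry.left j) * antipode (R := k) (rx.left i)) *
      (((rxR i).left l * (ryR j).left m) *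
        antipode (R := k) ((rxR i).right l * (ryR j).right m)) with hE
  have h1 : E = antipode (R := k) y * antipode (R := k) x := by
    have e1 : E = ∑ j ∈ ry.index, ∑ i ∈ rx.index,
        (counit (R := k) (rx.right i) * counit (R := k) (ry.right j)) •
          (antipode (R := k) (ry.left j) * antipode (R := k) (rx.left i)) := by
      rw [hE]
      refine Finset.sum_congr rfl fun j _ => ?_
      rw [Finset.sum_comm]
      refine Finset.sum_congr rfl fun i _ => ?_
      have collapse := sum_mul_antipode_mul (rxR i) (ryR j)
      calc ∑ m ∈ (ryR j).index, ∑ l ∈ (rxR i).index,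
            (antipode (R := k) (ry.left j) * antipode (R := k) (rx.left i)) *
              (((rxR i).left l * (ryR j).left m) *
                antipode (R := k) ((rxR i).right l * (ryR j).right m))
          = (antipode (R := k) (ry.left j) * antipode (R := k) (rx.left i)) *
              ∑ l ∈ (rxR i).index, ∑ m ∈ (ryR j).index,
                ((rxR i).left l * (ryR j).left m) *
                  antipode (R := k) ((rxR i).right l * (ryR j).right m) := by
            rw [Finset.sum_comm]
            simp only [Finset.mul_sum]
        _ = _ := by
            rw [collapse, mul_smul_comm, mul_one]
    rw [e1]
    have hy : antipode (R := k) y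
        = ∑ j ∈ ry.index, counit (R := k) (ry.right j) • antipode (R := k) (ry.left j) := by
      conv_lhs => rw [← aux_counit_smul_left ry]
      rw [map_sum]
      simp only [map_smul]
    have hx : antipode (R := k) x
        = ∑ i ∈ rx.index, counit (R := k) (rx.right i) • antipode (R := k) (rx.left i) := by
      conv_lhs => rw [← aux_counit_smul_left rx]
      rw [map_sum]
      simp only [map_smul]
    rw [hy, hx, Finset.sum_mul_sum]
    refine Finset.sum_congr rfl fun j _ => Finset.sum_congr rfl fun i _ => ?_
    rw [smul_mul_smul_comm, mul_comm (counit (R := k) (rx.right i))]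
  have h2 : E = antipode (R := k) (x * y) := by
    have hA : ∀ u v w : H,
        ∑ i ∈ rx.index, ∑ l ∈ (rxR i).index,
          (antipode (R := k) u * antipode (R := k) (rx.left i)) *
            (((rxR i).left l * v) * antipode (R := k) ((rxR i).right l * w))
        = ∑ i ∈ rx.index, ∑ l ∈ (rxL i).index,
          (antipode (R := k) u * antipode (R := k) ((rxL i).left l)) *
            (((rxL i).right l * v) * antipode (R := k) (rx.right i * w)) := by
      intro u v w
      have hco := Coalgebra.sum_tmul_tmul_eq rx rxL rxR
      have := congrArg (psi1 (k := k) u v w) hco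
      simpa only [map_sum, psi1_tmul] using this.symm
    have hXcollapse : ∀ u v w : H,
        ∑ i ∈ rx.index, ∑ l ∈ (rxL i).index,
          (antipode (R := k) u * antipode (R := k) ((rxL i).left l)) *
            (((rxL i).right l * v) * antipode (R := k) (rx.right i * w))
        = antipode (R := k) u * (v * antipode (R := k) (x * w)) := by
      intro u v w
      have step1 : ∀ i ∈ rx.index,
          ∑ l ∈ (rxL i).index,
            (antipode (R := k) u * antipode (R := k) ((rxL i).left l)) *
              (((rxL i).right l * v) * antipode (R := k) (rx.right i * w))
          = counit (R := k) (rx.left i) •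
              (antipode (R := k) u * (v * antipode (R := k) (rx.right i * w))) := by
        intro i _
        have collapse := sum_antipode_mul_eq_smul (rxL i)
        calc ∑ l ∈ (rxL i).index,
              (antipode (R := k) u * antipode (R := k) ((rxL i).left l)) *
                (((rxL i).right l * v) * antipode (R := k) (rx.right i * w))
            = antipode (R := k) u *
                ((∑ l ∈ (rxL i).index,
                    antipode (R := k) ((rxL i).left l) * (rxL i).right l) *
                  (v * antipode (R := k) (rx.right i * w))) := by
              rw [Finset.sum_mul, Finset.mul_sum]
              simp only [mul_assoc]
          _ = _ := by
              rw [collapse, smul_mul_assoc, one_mul, mul_smul_comm]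
      rw [Finset.sum_congr rfl step1]
      have lin : ∑ i ∈ rx.index, counit (R := k) (rx.left i) •
            (antipode (R := k) u * (v * antipode (R := k) (rx.right i * w)))
          = antipode (R := k) u * (v * antipode (R := k)
              ((∑ i ∈ rx.index, counit (R := k) (rx.left i) • rx.right i) * w)) := by
        rw [Finset.sum_mul, map_sum, Finset.mul_sum, Finset.mul_sum]
        refine Finset.sum_congr rfl fun i _ => ?_
        rw [smul_mul_assoc, map_smul, mul_smul_comm, mul_smul_comm]
      rw [lin, aux_counit_smul_right rx]
    have e2 : E = ∑ j ∈ ry.index, ∑ m ∈ (ryR j).index,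
        antipode (R := k) (ry.left j) *
          ((ryR j).left m * antipode (R := k) (x * (ryR j).right m)) := by
      rw [hE]
      refine Finset.sum_congr rfl fun j _ => Finset.sum_congr rfl fun m _ => ?_
      rw [hA (ry.left j) ((ryR j).left m) ((ryR j).right m),
        hXcollapse (ry.left j) ((ryR j).left m) ((ryR j).right m)]
    have hB : ∑ j ∈ ry.index, ∑ m ∈ (ryR j).index,
          antipode (R := k) (ry.left j) *
            ((ryR j).left m * antipode (R := k) (x * (ryR j).right m))
        = ∑ j ∈ ry.index, ∑ m ∈ (ryL j).index,
          antipode (R := k) ((ryL j).left m) *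
            ((ryL j).right m * antipode (R := k) (x * ry.right j)) := by
      have hco := Coalgebra.sum_tmul_tmul_eq ry ryL ryR
      have := congrArg (psi2 (k := k) x) hco
      simpa only [map_sum, psi2_tmul] using this.symm
    have step2 : ∀ j ∈ ry.index,
        ∑ m ∈ (ryL j).index,
          antipode (R := k) ((ryL j).left m) *
            ((ryL j).right m * antipode (R := k) (x * ry.right j))
        = counit (R := k) (ry.left j) • antipode (R := k) (x * ry.right j) := by
      intro j _
      have collapse := sum_antipode_mul_eq_smul (ryL j)
      calc ∑ m ∈ (ryL j).index,
            antipode (R := k) ((ryL j).left m) *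
              ((ryL j).right m * antipode (R := k) (x * ry.right j))
          = (∑ m ∈ (ryL j).index,
              antipode (R := k) ((ryL j).left m) * (ryL j).right m) *
              antipode (R := k) (x * ry.right j) := by
            rw [Finset.sum_mul]
            simp only [mul_assoc]
        _ = _ := by rw [collapse, smul_mul_assoc, one_mul]
    rw [e2, hB, Finset.sum_congr rfl step2]
    have lin2 : ∑ j ∈ ry.index,
          counit (R := k) (ry.left j) • antipode (R := k) (x * ry.right j)
        = antipode (R := k) (x * ∑ j ∈ ry.index, counit (R := k) (ry.left j) • ry.right j) := by
      rw [Finset.mul_sum, map_sum]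
      refine Finset.sum_congr rfl fun j _ => ?_
      rw [mul_smul_comm, map_smul]
    rw [lin2, aux_counit_smul_right ry]
  rw [← h2, h1]
section SinvLemmas

variable (Sinv : H →ₗ[k] H)

lemma Sinv_one' (hS₂ : ∀ a : H, Sinv (HopfAlgebra.antipode (R := k) a) = a) :
    Sinv (1 : H) = 1 := by
  have h := hS₂ 1
  rwa [antipode_one'] at h

lemma Sinv_mul' (hS₁ : ∀ a : H, HopfAlgebra.antipode (R := k) (Sinv a) = a)
    (hS₂ : ∀ a : H, Sinv (HopfAlgebra.antipode (R := k) a) = a) (x y : H) :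
    Sinv (x * y) = Sinv y * Sinv x := by
  have hxy : x * y = antipode (R := k) (Sinv y * Sinv x) := by
    rw [antipode_mul_rev, hS₁, hS₁]
  rw [hxy, hS₂]

lemma sinv_collapse (hS₁ : ∀ a : H, HopfAlgebra.antipode (R := k) (Sinv a) = a)
    (hS₂ : ∀ a : H, Sinv (HopfAlgebra.antipode (R := k) a) = a)
    {ι : Type*} {b : H} (r : Coalgebra.Repr k b ι) :
    ∑ i ∈ r.index, Sinv (r.right i) * r.left i = counit (R := k) b • (1 : H) := by
  have h := sum_antipode_mul_eq_smul r
  have h2 := congrArg Sinv h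
  rw [map_sum] at h2
  calc ∑ i ∈ r.index, Sinv (r.right i) * r.left i
      = ∑ i ∈ r.index, Sinv (antipode (R := k) (r.left i) * r.right i) := by
        refine Finset.sum_congr rfl fun i _ => ?_
        rw [Sinv_mul' Sinv hS₁ hS₂, hS₂]
    _ = Sinv (counit (R := k) b • 1) := h2
    _ = counit (R := k) b • (1 : H) := by rw [map_smul, Sinv_one' Sinv hS₂]

/-- The map `x ⊗ (u ⊗ v) ↦ (Sinv u * x) ⊗ v`. -/
noncomputable def Gmap : H ⊗[k] (H ⊗[k] H) →ₗ[k] H ⊗[k] H :=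
  (TensorProduct.map
      (mul' k H ∘ₗ TensorProduct.map Sinv LinearMap.id ∘ₗ (TensorProduct.comm k H H).toLinearMap)
      LinearMap.id) ∘ₗ (TensorProduct.assoc k H H H).symm.toLinearMap

@[simp] lemma Gmap_tmul (x u v : H) :
    Gmap Sinv (x ⊗ₜ[k] (u ⊗ₜ[k] v)) = (Sinv u * x) ⊗ₜ[k] v := by
  simp [Gmap, mul'_apply]

lemma key_lemma (hS₁ : ∀ a : H, HopfAlgebra.antipode (R := k) (Sinv a) = a)
    (hS₂ : ∀ a : H, Sinv (HopfAlgebra.antipode (R := k) a) = a)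
    (a : H) (n : ℕ) (f g : Fin n → H)
    (hrep : Coalgebra.comul (R := k) a = ∑ j, f j ⊗ₜ[k] g j)
    {ι : Type*} (rg : ∀ j : Fin n, Coalgebra.Repr k (g j) ι) :
    ∑ j, ∑ m ∈ (rg j).index, (Sinv ((rg j).left m) * f j) ⊗ₜ[k] (rg j).right m
      = (1 : H) ⊗ₜ[k] a := by
  classical
  let ra : Coalgebra.Repr k a (Fin n) := ⟨Finset.univ, f, g, hrep.symm⟩
  let rfa : ∀ i : Fin n, Coalgebra.Repr k (ra.left i) (H × H) := fun i => Coalgebra.Repr.arbitrary k _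
  have hco := Coalgebra.sum_tmul_tmul_eq ra rfa rg
  have h2 := congrArg (Gmap (k := k) Sinv) hco
  simp only [map_sum, Gmap_tmul] at h2
  rw [← h2]
  calc ∑ i, ∑ l ∈ (rfa i).index,
        (Sinv ((rfa i).right l) * (rfa i).left l) ⊗ₜ[k] g i
      = ∑ i : Fin n, (∑ l ∈ (rfa i).index,
          Sinv ((rfa i).right l) * (rfa i).left l) ⊗ₜ[k] g i := by
        refine Finset.sum_congr rfl fun i _ => ?_
        rw [TensorProduct.sum_tmul]
    _ = ∑ i : Fin n, (counit (R := k) (f i) • (1 : H)) ⊗ₜ[k] g i := by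
        refine Finset.sum_congr rfl fun i _ => ?_
        rw [sinv_collapse Sinv hS₁ hS₂ (rfa i)]
    _ = (1 : H) ⊗ₜ[k] ∑ i : Fin n, counit (R := k) (f i) • g i := by
        rw [TensorProduct.tmul_sum]
        refine Finset.sum_congr rfl fun i _ => ?_
        rw [TensorProduct.smul_tmul]
    _ = (1 : H) ⊗ₜ[k] a := by
        rw [show ∑ i : Fin n, counit (R := k) (f i) • g i = a from aux_counit_smul_right ra]

end SinvLemmas
lemma hstar_repr (lam : H →ₗ[k] k) (Sinv : H →ₗ[k] H) {ι : Type*} (b b' : H) (r : Coalgebra.Repr k b' ι) :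
    hstar lam Sinv b b' = ∑ i ∈ r.index, lam (Sinv (r.left i) * b) • r.right i := by
  rw [hstar, ← r.eq, map_sum]
  refine Finset.sum_congr rfl fun i _ => ?_
  simp [TensorProduct.lift.tmul, mul_apply']

/-- for a Hopf algebra `H` with a left integral `λ` and bijective
antipode, the distributivity law `a (a' ⋆ a'') = (a₍₁₎ a') ⋆ (a₍₂₎ a'')` holds,
the Sweedler sum being expressed through any finite representation of `comul a`. -/
theorem stmt18 (lam : H →ₗ[k] k) (Sinv : H →ₗ[k] H)
    (hS₁ : ∀ a : H, HopfAlgebra.antipode (R := k) (Sinv a) = a)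
    (hS₂ : ∀ a : H, Sinv (HopfAlgebra.antipode (R := k) a) = a)
    (hlam : ∀ (a : H) (n : ℕ) (f g : Fin n → H),
      Coalgebra.comul (R := k) a = ∑ j, f j ⊗ₜ[k] g j →
      ∑ j, lam (g j) • f j = lam a • (1 : H)) :
    ∀ (a a' a'' : H) (n : ℕ) (f g : Fin n → H),
      Coalgebra.comul (R := k) a = ∑ j, f j ⊗ₜ[k] g j →
      a * hstar lam Sinv a' a'' = ∑ j, hstar lam Sinv (f j * a') (g j * a'') := by
  intro a a' a'' n f g hrep
  classical
  let rc := Coalgebra.Repr.arbitrary k a''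
  let rg : ∀ j : Fin n, Coalgebra.Repr k (g j) (H × H) := fun j => Coalgebra.Repr.arbitrary k _
  have hL : hstar lam Sinv a' a'' = ∑ t ∈ rc.index, lam (Sinv (rc.left t) * a') • rc.right t :=
    hstar_repr lam Sinv a' a'' rc
  have hR : ∀ j, hstar lam Sinv (f j * a') (g j * a'')
      = ∑ m ∈ (rg j).index, ∑ t ∈ rc.index,
          lam (Sinv ((rg j).left m * rc.left t) * (f j * a')) •
            ((rg j).right m * rc.right t) := by
    intro j
    rw [hstar_repr lam Sinv (f j * a') (g j * a'') (mulRepr (rg j) rc)]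
    simp [mulRepr, Finset.sum_product]
  let B : H × H → (H ⊗[k] H →ₗ[k] H) := fun t =>
    TensorProduct.lift (lcomp k H (mulRight k (rc.right t)) ∘ₗ lsmul k H ∘ₗ lam ∘ₗ
      (LinearMap.mul k H).flip a' ∘ₗ mulLeft k (Sinv (rc.left t)))
  have hB : ∀ t (u v : H),
      B t (u ⊗ₜ[k] v) = lam (Sinv (rc.left t) * u * a') • (v * rc.right t) := by
    intro t u v
    simp [B, TensorProduct.lift.tmul, mul_apply', lcomp_apply]
  have hkey := key_lemma Sinv hS₁ hS₂ a n f g hrep rg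
  have hRHS : ∑ j, hstar lam Sinv (f j * a') (g j * a'')
      = a * hstar lam Sinv a' a'' := by
    calc ∑ j, hstar lam Sinv (f j * a') (g j * a'')
        = ∑ j, ∑ m ∈ (rg j).index, ∑ t ∈ rc.index,
            lam (Sinv ((rg j).left m * rc.left t) * (f j * a')) •
              ((rg j).right m * rc.right t) := by
          exact Finset.sum_congr rfl fun j _ => hR j
      _ = ∑ j, ∑ t ∈ rc.index, ∑ m ∈ (rg j).index,
            lam (Sinv (rc.left t) * (Sinv ((rg j).left m) * f j) * a') •
              ((rg j).right m * rc.right t) := by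
          refine Finset.sum_congr rfl fun j _ => ?_
          rw [Finset.sum_comm]
          refine Finset.sum_congr rfl fun t _ => Finset.sum_congr rfl fun m _ => ?_
          rw [Sinv_mul' Sinv hS₁ hS₂]
          congr 1
          simp only [mul_assoc]
      _ = ∑ t ∈ rc.index, ∑ j, ∑ m ∈ (rg j).index,
            lam (Sinv (rc.left t) * (Sinv ((rg j).left m) * f j) * a') •
              ((rg j).right m * rc.right t) := Finset.sum_comm
      _ = ∑ t ∈ rc.index, B t (∑ j, ∑ m ∈ (rg j).index,
            (Sinv ((rg j).left m) * f j) ⊗ₜ[k] (rg j).right m) := by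
          refine Finset.sum_congr rfl fun t _ => ?_
          rw [map_sum]
          refine (Finset.sum_congr rfl fun j _ => ?_).symm
          rw [map_sum]
          exact Finset.sum_congr rfl fun m _ => hB t _ _
      _ = ∑ t ∈ rc.index, B t ((1 : H) ⊗ₜ[k] a) := by rw [hkey]
      _ = ∑ t ∈ rc.index, lam (Sinv (rc.left t) * a') • (a * rc.right t) := by
          refine Finset.sum_congr rfl fun t _ => ?_
          rw [hB t 1 a, mul_one]
      _ = a * hstar lam Sinv a' a'' := by
          rw [hL, Finset.mul_sum]
          refine (Finset.sum_congr rfl fun t _ => ?_).symm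
          rw [mul_smul_comm]
  exact hRHS.symm
end

section
/- Let $A$ be a distributive Frobenius double algebra with antipode $S$ and dual basis $u_k\otimes_B v_k$ for $\Phi_B$. Then the left bialgebroid $(V, B, \Phi_L|_B, \Phi_R|_B, \Delta_B, \Phi_B)$ with $\Delta_B(a) = a\star u_k \otimes_B v_k$ satisfies the Hopf algebroid antipode axiom: $S(a_{(1)})_{(1)}\circ a_{(2)} \otimes_B S(a_{(1)})_{(2)} = e\otimes_B S(a)$ for all $a \in A$, where $a_{(1)}\otimes a_{(2)}$ denotes $\Delta_B(a)$. -/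
variable {k A : Type*} [CommRing k] [AddCommGroup A] [Module k A]

/-
The computation reduces to the identity `∑ₘ (S(a ⋆ uₘ) ⋆ w) ∘ vₘ = e ⋆ Φ_B(S(a) ⋆ w)` in `A`,
after which the balanced map `β` moves `Φ_B(S(a) ⋆ uₗ)` across the tensor sign and the dual
basis property reassembles `S(a)`. The identity is tested against the nondegenerate pairing
`(y, x) ↦ Φ_B(y ⋆ x)`: the antipode axiom for `Φ_B` turns the left side into
`∑ₘ (y ∘ S(vₘ)) ⋆ (S(uₘ) ⋆ S(a) ⋆ w)`, which distributivity, transported along the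
antiautomorphism `S`, collapses to `Φ_L(y) ∘ (S(a) ⋆ w)`.
-/

namespace DoubleAlgebra

variable (D : DoubleAlgebra k A)

theorem PhiB_sum {ι : Type*} (s : Finset ι) (f : ι → A) :
    D.PhiB (∑ m ∈ s, f m) = ∑ m ∈ s, D.PhiB (f m) := by
  simp only [PhiB, map_sum, LinearMap.sum_apply]

theorem PhiB_hmul_PhiB_left (z y : A) :
    D.PhiB (D.hmul (D.PhiB z) y) = D.hmul (D.PhiB z) (D.PhiB y) := by
  simp only [PhiB]
  rw [D.A3, D.vmul_assoc, ← D.A3]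

theorem PhiB_hmul_PhiB_right (z y : A) :
    D.PhiB (D.hmul z (D.PhiB y)) = D.hmul (D.PhiB z) (D.PhiB y) := by
  simp only [PhiB]
  rw [D.A4, D.vmul_assoc, ← D.A4]

theorem PhiB_vmul_PhiL (z y : A) :
    D.PhiB (D.vmul (D.PhiL z) y) = D.PhiB (D.hmul (D.PhiL z) (D.PhiB y)) := by
  rw [PhiB_hmul_PhiB_right, ← PhiB_hmul_PhiB_left, PhiL, D.A1]
  rfl

section DualBasis

variable {ι : Type*} [Fintype ι] {u v : ι → A}

theorem eq_of_forall_PhiB_hmul_eq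
    (hdual₂ : ∀ a, ∑ m, D.hmul (u m) (D.PhiB (D.hmul (v m) a)) = a) {x x' : A}
    (h : ∀ y, D.PhiB (D.hmul y x) = D.PhiB (D.hmul y x')) : x = x' := by
  rw [← hdual₂ x, ← hdual₂ x']
  simp only [h]

theorem sum_balanced_hmul_PhiB_dual
    (hdual₁ : ∀ a, ∑ m, D.hmul (D.PhiB (D.hmul a (u m))) (v m) = a)
    {M : Type*} [AddCommGroup M] (β : A → A → M)
    (hβr : ∀ x y y', β x (y + y') = β x y + β x y')
    (hbal : ∀ x y b, b ∈ Set.range D.PhiB → β (D.hmul x b) y = β x (D.hmul b y)) (x c : A) :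
    ∑ l, β (D.hmul x (D.PhiB (D.hmul c (u l)))) (v l) = β x c := by
  calc ∑ l, β (D.hmul x (D.PhiB (D.hmul c (u l)))) (v l)
      = ∑ l, β x (D.hmul (D.PhiB (D.hmul c (u l))) (v l)) :=
        Finset.sum_congr rfl fun l _ => hbal _ _ _ ⟨_, rfl⟩
    _ = β x (∑ l, D.hmul (D.PhiB (D.hmul c (u l))) (v l)) :=
        (map_sum (AddMonoidHom.mk' (β x) (hβr x)) _ _).symm
    _ = β x c := by rw [hdual₁]

theorem sum_vmul_antipode_hmul_antipode
    (hdistr : ∀ a a' a'', D.vmul a (D.hmul a' a'') =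
      ∑ m, D.hmul (D.vmul (D.hmul a (u m)) a') (D.vmul (v m) a''))
    (S : A →ₗ[k] A) (hSsurj : Function.Surjective S)
    (hSv : ∀ a a', S (D.vmul a a') = D.vmul (S a') (S a))
    (hSh : ∀ a a', S (D.hmul a a') = D.hmul (S a') (S a)) (hSe : S D.e = D.e) (p s : A) :
    ∑ m, D.hmul (D.vmul p (S (v m))) (D.hmul (S (u m)) s) = D.vmul (D.PhiL p) s := by
  obtain ⟨b, rfl⟩ := hSsurj p
  obtain ⟨c, rfl⟩ := hSsurj s
  have hdistr_e : ∑ m, D.hmul (D.hmul c (u m)) (D.vmul (v m) b) = D.vmul c (D.PhiR b) := by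
    simp only [PhiR, hdistr c D.e b, D.vmul_e]
  calc ∑ m, D.hmul (D.vmul (S b) (S (v m))) (D.hmul (S (u m)) (S c))
      = S (∑ m, D.hmul (D.hmul c (u m)) (D.vmul (v m) b)) := by
        simp only [map_sum, hSh, hSv]
    _ = D.vmul (D.PhiL (S b)) (S c) := by
        rw [hdistr_e, hSv, PhiR, hSh, hSe, PhiL]

theorem sum_antipode_hmul_vmul
    (hdual₂ : ∀ a, ∑ m, D.hmul (u m) (D.PhiB (D.hmul (v m) a)) = a)
    (hdistr : ∀ a a' a'', D.vmul a (D.hmul a' a'') =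
      ∑ m, D.hmul (D.vmul (D.hmul a (u m)) a') (D.vmul (v m) a''))
    (S : A →ₗ[k] A) (hSsurj : Function.Surjective S)
    (hSv : ∀ a a', S (D.vmul a a') = D.vmul (S a') (S a))
    (hSh : ∀ a a', S (D.hmul a a') = D.hmul (S a') (S a)) (hSe : S D.e = D.e)
    (hSB : ∀ a a' a'', D.PhiB (D.hmul a' (D.vmul a'' a)) =
      D.PhiB (D.hmul (D.vmul a' (S a)) a'')) (a w : A) :
    ∑ m, D.vmul (D.hmul (S (D.hmul a (u m))) w) (v m) = D.PhiR (D.PhiB (D.hmul (S a) w)) := by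
  refine D.eq_of_forall_PhiB_hmul_eq hdual₂ fun y => ?_
  calc D.PhiB (D.hmul y (∑ m, D.vmul (D.hmul (S (D.hmul a (u m))) w) (v m)))
      = D.PhiB (∑ m, D.hmul (D.vmul y (S (v m))) (D.hmul (S (u m)) (D.hmul (S a) w))) := by
        simp only [map_sum, PhiB_sum, hSB, hSh, D.hmul_assoc]
    _ = D.PhiB (D.vmul (D.PhiL y) (D.hmul (S a) w)) := by
        rw [D.sum_vmul_antipode_hmul_antipode hdistr S hSsurj hSv hSh hSe]
    _ = D.PhiB (D.hmul y (D.PhiR (D.PhiB (D.hmul (S a) w)))) := by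
        rw [PhiB_vmul_PhiL, PhiL, PhiR, D.hmul_assoc]

end DualBasis

end DoubleAlgebra

/-- Equality in `A ⊗_B A` is expressed by saying that every `k`-bilinear, `B`-balanced map `β`
takes the same value on both sides. -/
theorem stmt19_general (D : DoubleAlgebra k A)
    {ι : Type*} [Fintype ι] (u v : ι → A)
    -- `∑ uₖ ⊗_B vₖ` is a dual basis for the Frobenius homomorphism `Φ_B`
    (hdual₁ : ∀ a, ∑ m, D.hmul (D.PhiB (D.hmul a (u m))) (v m) = a)
    (hdual₂ : ∀ a, ∑ m, D.hmul (u m) (D.PhiB (D.hmul (v m) a)) = a)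
    -- distributivity: `a ∘ (a' ⋆ a'') = (a₍₁₎ ∘ a') ⋆ (a₍₂₎ ∘ a'')`
    (hdistr : ∀ a a' a'', D.vmul a (D.hmul a' a'') =
      ∑ m, D.hmul (D.vmul (D.hmul a (u m)) a') (D.vmul (v m) a''))
    -- the antipode `S`
    (S : A →ₗ[k] A) (hSbij : Function.Bijective S)
    (hSv : ∀ a a', S (D.vmul a a') = D.vmul (S a') (S a))
    (hSh : ∀ a a', S (D.hmul a a') = D.hmul (S a') (S a))
    (hSe : S D.e = D.e)
    (hSB : ∀ a a' a'', D.PhiB (D.hmul a' (D.vmul a'' a)) =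
      D.PhiB (D.hmul (D.vmul a' (S a)) a'')) :
    ∀ (M : Type*) [AddCommGroup M] [Module k M] (β : A → A → M),
      (∀ x x' y, β (x + x') y = β x y + β x' y) →
      (∀ x y y', β x (y + y') = β x y + β x y') →
      (∀ (c : k) x y, β (c • x) y = c • β x y) →
      (∀ (c : k) x y, β x (c • y) = c • β x y) →
      -- `β` is balanced over the bottom base algebra `B`
      (∀ x y b, b ∈ Set.range D.PhiB → β (D.hmul x b) y = β x (D.hmul b y)) →
      ∀ a : A,
        ∑ m, ∑ l, β (D.vmul (D.hmul (S (D.hmul a (u m))) (u l)) (v m)) (v l) =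
          β D.e (S a) := by
  intro M _ _ β hβl hβr _ _ hbal a
  calc ∑ m, ∑ l, β (D.vmul (D.hmul (S (D.hmul a (u m))) (u l)) (v m)) (v l)
      = ∑ l, β (∑ m, D.vmul (D.hmul (S (D.hmul a (u m))) (u l)) (v m)) (v l) := by
        rw [Finset.sum_comm]
        exact Finset.sum_congr rfl fun l _ =>
          (map_sum (AddMonoidHom.mk' (β · (v l)) (hβl · · (v l))) _ _).symm
    _ = ∑ l, β (D.hmul D.e (D.PhiB (D.hmul (S a) (u l)))) (v l) := by
        simp only [D.sum_antipode_hmul_vmul hdual₂ hdistr S hSbij.2 hSv hSh hSe hSB,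
          DoubleAlgebra.PhiR]
    _ = β D.e (S a) := D.sum_balanced_hmul_PhiB_dual hdual₁ β hβr hbal D.e (S a)

/-- let `A` be a distributive Frobenius double algebra with antipode
`S` and dual basis `∑ uₖ ⊗_B vₖ` for `Φ_B`, so that `Δ_B(a) = ∑ (a ⋆ uₖ) ⊗_B vₖ`.
Then the Hopf algebroid antipode axiom `S(a₍₁₎)₍₁₎ ∘ a₍₂₎ ⊗_B S(a₍₁₎)₍₂₎ = e ⊗_B S(a)`
holds in `A ⊗_B A`: equality of the two sides is expressed by saying that every
`k`-bilinear, `B`-balanced map `β` takes the same value on them. -/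
theorem stmt19 (D : DoubleAlgebra k A)
    {ι : Type*} [Fintype ι] (u v : ι → A)
    -- `∑ uₖ ⊗_B vₖ` is a dual basis for the Frobenius homomorphism `Φ_B`
    (hdual₁ : ∀ a, ∑ m, D.hmul (D.PhiB (D.hmul a (u m))) (v m) = a)
    (hdual₂ : ∀ a, ∑ m, D.hmul (u m) (D.PhiB (D.hmul (v m) a)) = a)
    -- distributivity: `a ∘ (a' ⋆ a'') = (a₍₁₎ ∘ a') ⋆ (a₍₂₎ ∘ a'')`
    (hdistr : ∀ a a' a'', D.vmul a (D.hmul a' a'') =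
      ∑ m, D.hmul (D.vmul (D.hmul a (u m)) a') (D.vmul (v m) a''))
    -- the antipode `S`
    (S : A →ₗ[k] A) (hSbij : Function.Bijective S)
    (hSv : ∀ a a', S (D.vmul a a') = D.vmul (S a') (S a))
    (hSh : ∀ a a', S (D.hmul a a') = D.hmul (S a') (S a))
    (hSe : S D.e = D.e) (hSi : S D.i = D.i)
    (hSB : ∀ a a' a'', D.PhiB (D.hmul a' (D.vmul a'' a)) =
      D.PhiB (D.hmul (D.vmul a' (S a)) a''))
    (hSR : ∀ a a' a'', D.PhiR (D.vmul a' (D.hmul a a'')) =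
      D.PhiR (D.vmul (D.hmul (S a) a') a''))
    (hSL : ∀ a a' a'', D.PhiL (D.vmul (D.hmul a' a) a'') =
      D.PhiL (D.vmul a' (D.hmul a'' (S a))))
    (hST : ∀ a a' a'', D.PhiT (D.hmul (D.vmul a a') a'') =
      D.PhiT (D.hmul a' (D.vmul (S a) a''))) :
    ∀ (M : Type*) [AddCommGroup M] [Module k M] (β : A → A → M),
      (∀ x x' y, β (x + x') y = β x y + β x' y) →
      (∀ x y y', β x (y + y') = β x y + β x y') →
      (∀ (c : k) x y, β (c • x) y = c • β x y) →
      (∀ (c : k) x y, β x (c • y) = c • β x y) →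
      -- `β` is balanced over the bottom base algebra `B`
      (∀ x y b, b ∈ Set.range D.PhiB → β (D.hmul x b) y = β x (D.hmul b y)) →
      ∀ a : A,
        ∑ m, ∑ l, β (D.vmul (D.hmul (S (D.hmul a (u m))) (u l)) (v m)) (v l) =
          β D.e (S a) :=
  stmt19_general D u v hdual₁ hdual₂ hdistr S hSbij hSv hSh hSe hSB
end
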